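/- arXiv:2511.12272 — 8 statements merged into one kernel-verified Lean document; each statement's English description precedes it below -/
import Mathlib

section
/- Let X be a complex Hilbert space and let T be an invertible bounded linear operator on X. Then T has the shadowing property if and only if the right spectrum of T is disjoint from the unit circle in the complex plane, i.e., σ_r(T) ∩ 𝕋 = ∅. -/
/-!
For invertible `T`, shadowing is equivalent, by linearity, to solving the difference equation
`w (n + 1) - T (w n) = z n` with `‖w‖∞ ≤ C ‖z‖∞` for every bounded `z`.

Given such solutions and `‖λ‖ = 1`, solve with `z n = λ ^ (n + 1) • φ` and pair with `φ`: the
real parts of `conj λ ^ n * ⟪φ, w n⟫` stay bounded but grow by at least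
`‖φ‖² - C ‖φ‖ ‖(λ - T)† φ‖` per step. So `(λ - T)†` is bounded below, `(λ - T) (λ - T)†` is
coercive, hence invertible, and `(λ - T)† ((λ - T) (λ - T)†)⁻¹` is a right inverse of `λ - T`.

Conversely, if the right spectrum misses the circle, the same formula gives a smooth
`2π`-periodic family `R θ` of right inverses of `e^{iθ} - T`. Two integrations by parts make its
Fourier coefficients `K j` summable, and `K (j - 1) - T K j = δ_{j0}`, so
`w n = ∑ j, K j (z (n + j))` is a bounded solution.
-/

open Filter Topology

noncomputable section

variable {X : Type*} [NormedAddCommGroup X] [InnerProductSpace ℂ X] [CompleteSpace X]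

/-- `T` has the shadowing property: for every `ε > 0` there is `δ > 0` such that every
`δ`-pseudotrajectory of `T` is `ε`-shadowed by a real trajectory of `T`. -/
def ShadowingProperty {Y : Type*} [NormedAddCommGroup Y] [NormedSpace ℂ Y]
    (T : (Y →L[ℂ] Y)ˣ) : Prop :=
  ∀ ε > (0 : ℝ), ∃ δ > (0 : ℝ), ∀ x : ℤ → Y,
    (∀ n : ℤ, ‖x (n + 1) - (T : Y →L[ℂ] Y) (x n)‖ ≤ δ) →
      ∃ y : Y, ∀ n : ℤ, ‖x n - ((T ^ n : (Y →L[ℂ] Y)ˣ) : Y →L[ℂ] Y) y‖ ≤ ε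

/-- The right spectrum of `T`: the set of `λ ∈ ℂ` such that `λI - T` has no bounded
linear right inverse. -/
def RightSpectrum {Y : Type*} [NormedAddCommGroup Y] [NormedSpace ℂ Y]
    (T : Y →L[ℂ] Y) : Set ℂ :=
  {l : ℂ | ¬ ∃ S : Y →L[ℂ] Y, (l • (1 : Y →L[ℂ] Y) - T) * S = 1}

open Complex ContinuousLinearMap MeasureTheory Real
open scoped NNReal InnerProductSpace

open Finset in
theorem Int.exists_forall_sub_eq {M : Type*} [AddCommGroup M] (h : ℤ → M) :
    ∃ g : ℤ → M, ∀ n, g (n + 1) - g n = h n := by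
  refine ⟨fun n => ∑ k ∈ Ico 0 n, h k - ∑ k ∈ Ico n 0, h k, fun n => ?_⟩
  dsimp only
  rcases le_or_gt 0 n with hn | hn
  · rw [Ico_eq_empty_of_le hn, Ico_eq_empty_of_le (by omega : (0 : ℤ) ≤ n + 1),
      Ico_add_one_right_eq_Icc, ← Ico_insert_right hn, sum_insert (by simp)]
    abel
  · rw [Ico_eq_empty_of_le hn.le, Ico_eq_empty_of_le (by omega : n + 1 ≤ 0),
      Ico_add_one_left_eq_Ioo, ← Ioo_insert_left hn, sum_insert (by simp)]
    abel

theorem le_zero_of_forall_le_sub_of_abs_le {r : ℕ → ℝ} {d C : ℝ}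
    (hstep : ∀ n, d ≤ r (n + 1) - r n) (hbdd : ∀ n, |r n| ≤ C) : d ≤ 0 := by
  have hgrowth (n : ℕ) : n * d ≤ r n - r 0 := by
    induction n with
    | zero => simp
    | succ n ih => push_cast; linarith [hstep n]
  by_contra! hd
  obtain ⟨n, hn⟩ := exists_nat_gt (2 * C / d)
  rw [div_lt_iff₀ hd] at hn
  linarith [hgrowth n, abs_le.mp (hbdd n), abs_le.mp (hbdd 0)]

section Difference

variable {𝕜 Y : Type*} [NontriviallyNormedField 𝕜] [NormedAddCommGroup Y] [NormedSpace 𝕜 Y]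

def HasBoundedSolutions (T : Y →L[𝕜] Y) : Prop :=
  ∃ C : ℝ, ∀ (δ : ℝ) (z : ℤ → Y), (∀ n, ‖z n‖ ≤ δ) →
    ∃ w : ℤ → Y, (∀ n, ‖w n‖ ≤ C * δ) ∧ ∀ n, w (n + 1) - T (w n) = z n

namespace ContinuousLinearMap

theorem units_apply_zpow_apply (T : (Y →L[𝕜] Y)ˣ) (n : ℤ) (v : Y) :
    (T : Y →L[𝕜] Y) ((↑(T ^ n) : Y →L[𝕜] Y) v) = (↑(T ^ (n + 1)) : Y →L[𝕜] Y) v := by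
  rw [add_comm, zpow_one_add, Units.val_mul, mul_apply_eq_comp]

theorem exists_forall_add_one_sub_apply_eq (T : (Y →L[𝕜] Y)ˣ) (z : ℤ → Y) :
    ∃ x : ℤ → Y, ∀ n, x (n + 1) - (T : Y →L[𝕜] Y) (x n) = z n := by
  obtain ⟨g, hg⟩ :=
    Int.exists_forall_sub_eq fun n => (↑(T ^ (-(n + 1))) : Y →L[𝕜] Y) (z n)
  refine ⟨fun n => (↑(T ^ n) : Y →L[𝕜] Y) (g n), fun n => ?_⟩
  rw [units_apply_zpow_apply, ← map_sub, hg, ← mul_apply_eq_comp, ← Units.val_mul, ← zpow_add,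
    add_neg_cancel, zpow_zero, Units.val_one, one_apply_eq_self]

theorem eq_units_zpow_apply_of_forall_add_one {T : (Y →L[𝕜] Y)ˣ} {v : ℤ → Y}
    (hv : ∀ n, v (n + 1) = (T : Y →L[𝕜] Y) (v n)) (n : ℤ) :
    v n = (↑(T ^ n) : Y →L[𝕜] Y) (v 0) := by
  induction n using Int.induction_on with
  | zero => simp
  | succ k ih => rw [hv, ih, units_apply_zpow_apply]
  | pred k ih =>
    have hinj : Function.Injective (T : Y →L[𝕜] Y) := fun a b hab => by
      simpa [← mul_apply_eq_comp] using congrArg (↑T⁻¹ : Y →L[𝕜] Y) hab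
    apply hinj
    rw [← hv, sub_add_cancel, ih, units_apply_zpow_apply, sub_add_cancel]

end ContinuousLinearMap

theorem HasBoundedSolutions.of_kernel [CompleteSpace Y] {T : Y →L[𝕜] Y}
    {K : ℤ → Y →L[𝕜] Y} (hK : Summable fun j => ‖K j‖)
    (hKT : ∀ j, K (j - 1) - T * K j = if j = 0 then 1 else 0) :
    HasBoundedSolutions T := by
  refine ⟨∑' j, ‖K j‖, fun δ z hz => ?_⟩
  have hbound (n j : ℤ) : ‖K j (z (n + j))‖ ≤ ‖K j‖ * δ := (K j).le_opNorm_of_le (hz _)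
  have hsum (n : ℤ) : Summable fun j => K j (z (n + j)) :=
    .of_norm_bounded (hK.mul_right δ) (hbound n)
  have hsum' (n : ℤ) : Summable fun j => K (j - 1) (z (n + j)) :=
    .of_norm_bounded ((hK.comp_injective sub_left_injective).mul_right δ)
      fun j => (K (j - 1)).le_opNorm_of_le (hz _)
  have hshift (n : ℤ) : ∑' j, K j (z (n + 1 + j)) = ∑' j, K (j - 1) (z (n + j)) := by
    rw [← (Equiv.addRight (1 : ℤ)).tsum_eq (fun j => K (j - 1) (z (n + j)))]
    simp only [Equiv.coe_addRight, add_sub_cancel_right, add_right_comm n, add_assoc]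
  have hdelta (n j : ℤ) :
      K (j - 1) (z (n + j)) - T (K j (z (n + j))) = if j = 0 then z n else 0 := by
    rw [← mul_apply_eq_comp, ← sub_apply, hKT]
    split_ifs with hj <;> simp [hj]
  refine ⟨fun n => ∑' j, K j (z (n + j)), fun n => ?_, fun n => ?_⟩
  · exact tsum_of_norm_bounded (hK.hasSum.mul_right δ) (hbound n)
  · dsimp only
    rw [hshift, T.map_tsum (hsum n), ← (hsum' n).tsum_sub ((hsum n).mapL T)]
    simp only [hdelta, tsum_ite_eq]

end Difference

section Shadowing

variable {Y : Type*} [NormedAddCommGroup Y] [NormedSpace ℂ Y] {T : (Y →L[ℂ] Y)ˣ}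

theorem ShadowingProperty.hasBoundedSolutions (hT : ShadowingProperty T) :
    HasBoundedSolutions (T : Y →L[ℂ] Y) := by
  obtain ⟨δ₀, hδ₀, hsh⟩ := hT 1 one_pos
  refine ⟨δ₀⁻¹, fun δ z hz => ?_⟩
  rcases ((norm_nonneg _).trans (hz 0)).eq_or_lt with rfl | hδ
  · exact ⟨0, fun n => by simp, fun n => by simpa using (norm_le_zero_iff.mp (hz n)).symm⟩
  have hr : 0 < δ₀ / δ := div_pos hδ₀ hδ
  set c : ℂ := ((δ₀ / δ : ℝ) : ℂ)
  have hc : c ≠ 0 := ofReal_ne_zero.mpr hr.ne'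
  obtain ⟨x, hx⟩ := exists_forall_add_one_sub_apply_eq T fun n => c • z n
  obtain ⟨y, hy⟩ := hsh x fun n => by
    rw [hx, norm_smul, norm_real, Real.norm_of_nonneg hr.le]
    calc δ₀ / δ * ‖z n‖ ≤ δ₀ / δ * δ := by gcongr; exact hz n
      _ = δ₀ := by field_simp
  refine ⟨fun n => c⁻¹ • (x n - (↑(T ^ n) : Y →L[ℂ] Y) y), fun n => ?_, fun n => ?_⟩
  · rw [norm_smul, norm_inv, norm_real, Real.norm_of_nonneg hr.le]
    calc (δ₀ / δ)⁻¹ * ‖x n - (↑(T ^ n) : Y →L[ℂ] Y) y‖ ≤ (δ₀ / δ)⁻¹ * 1 := by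
          gcongr; exact hy n
      _ = δ₀⁻¹ * δ := by field_simp
  · rw [map_smul, ← smul_sub, map_sub, units_apply_zpow_apply, sub_sub_sub_cancel_right, hx,
      inv_smul_smul₀ hc]

theorem ShadowingProperty.of_hasBoundedSolutions (hT : HasBoundedSolutions (T : Y →L[ℂ] Y)) :
    ShadowingProperty T := by
  obtain ⟨C, hC⟩ := hT
  refine fun ε hε => ⟨ε / (|C| + 1), by positivity, fun x hx => ?_⟩
  obtain ⟨w, hw, hwT⟩ := hC _ _ hx
  refine ⟨x 0 - w 0, fun n => ?_⟩
  have horbit := eq_units_zpow_apply_of_forall_add_one (T := T) (v := fun n => x n - w n)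
    (fun n => by rw [map_sub]; exact sub_eq_sub_iff_sub_eq_sub.mpr (hwT n).symm) n
  rw [← horbit, sub_sub_cancel]
  calc ‖w n‖ ≤ C * (ε / (|C| + 1)) := hw n
    _ ≤ |C| * (ε / (|C| + 1)) := by gcongr; exact le_abs_self C
    _ ≤ ε := by
      rw [mul_div_assoc', div_le_iff₀ (by positivity)]
      nlinarith [abs_nonneg C]

end Shadowing

section Fourier

variable {E F : Type*} [NormedAddCommGroup E] [NormedSpace ℂ E]
  [NormedAddCommGroup F] [NormedSpace ℂ F] {a b : ℝ} (hab : a < b) {f g : ℝ → E} {n : ℤ}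

include hab in
theorem fourierCoeffOn_eq_smul_fourierCoeffOn_deriv [CompleteSpace E] {f' : ℝ → E}
    (hn : n ≠ 0) (hf : ∀ x ∈ Set.uIcc a b, HasDerivAt f (f' x) x)
    (hf' : IntervalIntegrable f' volume a b) (hfab : f a = f b) :
    fourierCoeffOn hab f n =
      (((b - a : ℝ) : ℂ) / (2 * π * I * n)) • fourierCoeffOn hab f' n := by
  have hT : Fact (0 < b - a) := ⟨by linarith⟩
  set u : ℝ → ℂ := fun y =>
    ((b - a : ℝ) : ℂ) / (-2 * π * I * n) * fourier (-n) (y : AddCircle (b - a))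
  have hu (x : ℝ) : HasDerivAt u (fourier (-n) (x : AddCircle (b - a))) x :=
    has_antideriv_at_fourier_neg hT hn x
  have hub : u b = u a := by
    simp only [u]
    congr 2
    simpa using AddCircle.coe_add_period (b - a) a
  have hibp := intervalIntegral.integral_smul_deriv_eq_deriv_smul (fun x _ => hu x) hf
    (((map_continuous (fourier (-n))).comp (AddCircle.continuous_mk' _)).intervalIntegrable _ _)
    hf'
  rw [hub, hfab, sub_self, zero_sub] at hibp
  rw [fourierCoeffOn_eq_integral, fourierCoeffOn_eq_integral, neg_eq_iff_eq_neg.mp hibp.symm]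
  simp only [u, mul_smul, intervalIntegral.integral_smul]
  rw [smul_neg, ← neg_smul]
  simp only [← coe_smul, smul_smul]
  congr 1
  push_cast
  field_simp

include hab in
theorem norm_fourierCoeffOn_le {M : ℝ} (hM : ∀ x ∈ Set.uIoc a b, ‖f x‖ ≤ M) :
    ‖fourierCoeffOn hab f n‖ ≤ M := by
  have hab' : 0 < b - a := by linarith
  rw [fourierCoeffOn_eq_integral, norm_smul]
  calc ‖1 / (b - a)‖ * ‖∫ x in a..b, fourier (-n) (x : AddCircle (b - a)) • f x‖
      ≤ ‖1 / (b - a)‖ * (M * |b - a|) := by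
        gcongr
        refine intervalIntegral.norm_integral_le_of_norm_le_const fun x hx => ?_
        rw [norm_smul, fourier_apply, Circle.norm_coe, one_mul]
        exact hM x hx
    _ = M := by
        rw [Real.norm_of_nonneg (by positivity), abs_of_pos hab']
        field_simp

include hab in
theorem fourierCoeffOn_const [CompleteSpace E] (v : E) :
    fourierCoeffOn hab (fun _ => v) n = if n = 0 then v else 0 := by
  split_ifs with hn
  · rw [fourierCoeffOn_eq_integral, hn, neg_zero]
    simp only [fourier_zero, one_smul, intervalIntegral.integral_const, smul_smul]
    rw [one_div_mul_cancel (by linarith), one_smul]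
  · rw [fourierCoeffOn_eq_smul_fourierCoeffOn_deriv hab hn (fun x _ => hasDerivAt_const x v)
      intervalIntegrable_const rfl, fourierCoeffOn_eq_integral]
    simp

include hab in
theorem fourierCoeffOn_fourier_smul (m : ℤ) :
    fourierCoeffOn hab (fun x => fourier m (x : AddCircle (b - a)) • f x) n =
      fourierCoeffOn hab f (n - m) := by
  simp only [fourierCoeffOn_eq_integral, smul_smul, ← fourier_add, neg_sub, neg_add_eq_sub]

include hab in
theorem fourierCoeffOn_sub (hf : IntervalIntegrable f volume a b)
    (hg : IntervalIntegrable g volume a b) :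
    fourierCoeffOn hab (fun x => f x - g x) n =
      fourierCoeffOn hab f n - fourierCoeffOn hab g n := by
  have hcont : ContinuousOn (fun x : ℝ => fourier (-n) (x : AddCircle (b - a))) (Set.uIcc a b) :=
    ((map_continuous (fourier (-n))).comp (AddCircle.continuous_mk' _)).continuousOn
  simp only [fourierCoeffOn_eq_integral, smul_sub,
    intervalIntegral.integral_sub (hf.continuousOn_smul hcont) (hg.continuousOn_smul hcont)]

include hab in
theorem ContinuousLinearMap.map_fourierCoeffOn [CompleteSpace E] [CompleteSpace F]
    (L : E →L[ℂ] F) (hf : IntervalIntegrable f volume a b) :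
    L (fourierCoeffOn hab f n) = fourierCoeffOn hab (fun x => L (f x)) n := by
  have hcont : ContinuousOn (fun x : ℝ => fourier (-n) (x : AddCircle (b - a))) (Set.uIcc a b) :=
    ((map_continuous (fourier (-n))).comp (AddCircle.continuous_mk' _)).continuousOn
  rw [fourierCoeffOn_eq_integral, fourierCoeffOn_eq_integral, map_smul_of_tower,
    ← L.intervalIntegral_comp_comm (hf.continuousOn_smul hcont)]
  simp only [map_smul]

include hab in
theorem summable_norm_fourierCoeffOn_of_contDiff [CompleteSpace E] (hf : ContDiff ℝ 2 f)
    (hper : f.Periodic (b - a)) : Summable fun n => ‖fourierCoeffOn hab f n‖ := by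
  obtain ⟨hf_diff, -, hf'⟩ := contDiff_succ_iff_deriv.mp (show ContDiff ℝ (1 + 1) f from hf)
  obtain ⟨hf'_diff, -, hf''⟩ :=
    contDiff_succ_iff_deriv.mp (show ContDiff ℝ (0 + 1) (deriv f) by simpa using hf')
  have hper' : (deriv f).Periodic (b - a) := fun x => by
    rw [← deriv_comp_add_const, funext hper]
  have hstep {g : ℝ → E} {n : ℤ} (hg : Differentiable ℝ g) (hg' : Continuous (deriv g))
      (hgper : g.Periodic (b - a)) (hn : n ≠ 0) : fourierCoeffOn hab g n =
        (((b - a : ℝ) : ℂ) / (2 * π * I * n)) • fourierCoeffOn hab (deriv g) n :=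
    fourierCoeffOn_eq_smul_fourierCoeffOn_deriv hab hn (fun x _ => (hg x).hasDerivAt)
      (hg'.intervalIntegrable _ _) (by simpa using (hgper a).symm)
  obtain ⟨M, hM⟩ := isCompact_uIcc.exists_bound_of_continuousOn
    (hf''.continuous.continuousOn (s := Set.uIcc a b))
  refine .of_norm_bounded_eventually
    (g := fun n : ℤ => ((b - a) / (2 * π)) ^ 2 * M * (1 / (n : ℝ) ^ 2))
    ((Real.summable_one_div_int_pow.mpr one_lt_two).mul_left _) ?_
  filter_upwards [Filter.eventually_cofinite_ne 0] with n hn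
  rw [norm_norm, hstep hf_diff hf'.continuous hper hn, hstep hf'_diff hf''.continuous hper' hn,
    norm_smul, norm_smul]
  have hc : ‖(((b - a : ℝ) : ℂ) / (2 * π * I * n))‖ = (b - a) / (2 * π) * (1 / |(n : ℝ)|) := by
    rw [norm_div, norm_real, Real.norm_of_nonneg (by linarith)]
    simp [abs_of_pos Real.pi_pos]
    field_simp
  have hcoeff := norm_fourierCoeffOn_le hab (n := n) fun x hx => hM x (Set.uIoc_subset_uIcc hx)
  rw [hc]
  calc _ = ((b - a) / (2 * π)) ^ 2 * (1 / (n : ℝ) ^ 2) *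
        ‖fourierCoeffOn hab (deriv (deriv f)) n‖ := by
        rw [← sq_abs (n : ℝ)]; ring
    _ ≤ ((b - a) / (2 * π)) ^ 2 * (1 / (n : ℝ) ^ 2) * M := by gcongr
    _ = _ := by ring

end Fourier

section Adjoint

variable {𝕜 H : Type*} [RCLike 𝕜] [NormedAddCommGroup H] [InnerProductSpace 𝕜 H]
  [CompleteSpace H]

namespace ContinuousLinearMap

theorem isUnit_mul_adjoint_of_antilipschitz {A : H →L[𝕜] H} {K : ℝ≥0}
    (hA : AntilipschitzWith K (adjoint A)) : IsUnit (A * adjoint A) := by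
  refine isUnit_of_forall_le_norm_inner_map _ (c := (K ^ 2 + 1)⁻¹) (by positivity) fun x => ?_
  have hx : ‖x‖ ≤ K * ‖adjoint A x‖ := (adjoint A).bound_of_antilipschitz hA x
  have hinner : ⟪(A * adjoint A) x, x⟫_𝕜 = ((‖adjoint A x‖ ^ 2 : ℝ) : 𝕜) := by
    rw [mul_apply_eq_comp, ← adjoint_inner_right, inner_self_eq_norm_sq_to_K]; norm_cast
  rw [hinner, RCLike.norm_ofReal, abs_of_nonneg (by positivity), NNReal.coe_inv,
    ← div_eq_mul_inv, div_le_iff₀ (by positivity)]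
  push_cast
  nlinarith [mul_le_mul hx hx (norm_nonneg x) (by positivity)]

theorem exists_mul_eq_one_of_antilipschitz_adjoint {A : H →L[𝕜] H} {K : ℝ≥0}
    (hA : AntilipschitzWith K (adjoint A)) : ∃ S : H →L[𝕜] H, A * S = 1 := by
  obtain ⟨u, hu⟩ := isUnit_mul_adjoint_of_antilipschitz hA
  exact ⟨adjoint A * ↑u⁻¹, by rw [← mul_assoc, ← hu, Units.mul_inv]⟩

theorem antilipschitz_adjoint_of_mul_eq_one {A S : H →L[𝕜] H} (h : A * S = 1) :
    AntilipschitzWith ‖S‖₊ (adjoint A) := by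
  have hSA : adjoint S * adjoint A = 1 := by
    rw [← star_eq_adjoint, ← star_eq_adjoint, ← star_mul, h, star_one]
  refine (adjoint A).antilipschitz_of_bound fun x => ?_
  calc ‖x‖ = ‖adjoint S (adjoint A x)‖ := by
        rw [← mul_apply_eq_comp, hSA, one_apply_eq_self]
    _ ≤ ‖adjoint S‖ * ‖adjoint A x‖ := le_opNorm _ _
    _ = ‖S‖₊ * ‖adjoint A x‖ := by rw [LinearIsometryEquiv.norm_map, coe_nnnorm]

end ContinuousLinearMap

end Adjoint

theorem sq_norm_le_mul_norm_adjoint_of_forall_sub_eq {T : X →L[ℂ] X} {l : ℂ} (hl : ‖l‖ = 1)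
    {φ : X} {w : ℕ → X} {M : ℝ} (hw : ∀ n, ‖w n‖ ≤ M)
    (hwT : ∀ n, w (n + 1) - T (w n) = l ^ (n + 1) • φ) :
    ‖φ‖ ^ 2 ≤ M * ‖adjoint (l • 1 - T) φ‖ := by
  set ψ := adjoint (l • 1 - T) φ
  set c := starRingEnd ℂ l
  have hcl : c * l = 1 := by rw [conj_mul', hl]; norm_num
  have hc : ‖c‖ = 1 := by rw [norm_conj, hl]
  have hinner (n : ℕ) : c ^ (n + 1) * ⟪φ, w (n + 1)⟫_ℂ =
      c ^ n * ⟪φ, w n⟫_ℂ + (‖φ‖ ^ 2 : ℝ) - c ^ (n + 1) * ⟪ψ, w n⟫_ℂ := by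
    have hψ : ⟪ψ, w n⟫_ℂ = l * ⟪φ, w n⟫_ℂ - ⟪φ, T (w n)⟫_ℂ := by
      rw [adjoint_inner_left, sub_apply, inner_sub_right, smul_apply, one_apply_eq_self,
        inner_smul_right]
    have hpow : c ^ (n + 1) * l ^ (n + 1) = 1 := by rw [← mul_pow, hcl, one_pow]
    rw [sub_eq_iff_eq_add.mp (hwT n), inner_add_right, inner_smul_right,
      inner_self_eq_norm_sq_to_K, hψ]
    push_cast
    linear_combination (‖φ‖ : ℂ) ^ 2 * hpow + c ^ n * ⟪φ, w n⟫_ℂ * hcl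
  have hnorm (k n : ℕ) (v : X) : ‖c ^ k * ⟪v, w n⟫_ℂ‖ ≤ ‖v‖ * M := by
    rw [norm_mul, norm_pow, hc, one_pow, one_mul]
    exact (norm_inner_le_norm _ _).trans (mul_le_mul_of_nonneg_left (hw n) (norm_nonneg _))
  have hstep (n : ℕ) : ‖φ‖ ^ 2 - M * ‖ψ‖ ≤
      (c ^ (n + 1) * ⟪φ, w (n + 1)⟫_ℂ).re - (c ^ n * ⟪φ, w n⟫_ℂ).re := by
    rw [hinner, sub_re, add_re, ofReal_re]
    linarith [(re_le_norm _).trans (hnorm (n + 1) n ψ)]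
  linarith [le_zero_of_forall_le_sub_of_abs_le hstep
    fun n => (abs_re_le_norm _).trans (hnorm n n φ)]

theorem HasBoundedSolutions.antilipschitz_adjoint {T : X →L[ℂ] X} (hT : HasBoundedSolutions T)
    {l : ℂ} (hl : ‖l‖ = 1) : ∃ K, AntilipschitzWith K (adjoint (l • 1 - T)) := by
  obtain ⟨C, hC⟩ := hT
  refine ⟨C.toNNReal, (adjoint _).antilipschitz_of_bound fun φ => ?_⟩
  obtain ⟨w, hw, hwT⟩ := hC ‖φ‖ (fun n => l ^ (n + 1) • φ) fun n => by
    rw [norm_smul, norm_zpow, hl, one_zpow, one_mul]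
  have hsq := sq_norm_le_mul_norm_adjoint_of_forall_sub_eq hl (w := fun n : ℕ => w n)
    (fun n => hw n) fun n => by simpa [← zpow_natCast] using hwT n
  rcases (norm_nonneg φ).eq_or_lt with h0 | hpos
  · rw [← h0]; positivity
  have : ‖φ‖ ≤ C * ‖adjoint (l • 1 - T) φ‖ := by nlinarith
  rw [Real.coe_toNNReal']
  exact this.trans (by gcongr; exact le_max_left C 0)

theorem ContDiff.clm_adjoint {G : Type*} [NormedAddCommGroup G] [NormedSpace ℝ G]
    {A : G → X →L[ℂ] X} {n : WithTop ℕ∞} (hA : ContDiff ℝ n A) :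
    ContDiff ℝ n fun g => ContinuousLinearMap.adjoint (A g) :=
  ((AddMonoidHom.mk' ContinuousLinearMap.adjoint (map_add _)).toRealLinearMap
    (ContinuousLinearMap.adjoint (𝕜 := ℂ) (E := X) (F := X)).continuous).contDiff.comp hA

theorem contDiff_adjoint_mul_ringInverse {G : Type*} [NormedAddCommGroup G] [NormedSpace ℝ G]
    {A : G → X →L[ℂ] X} {n : WithTop ℕ∞} (hA : ContDiff ℝ n A)
    (hunit : ∀ g, IsUnit (A g * adjoint (A g))) :
    ContDiff ℝ n fun g => adjoint (A g) * Ring.inverse (A g * adjoint (A g)) := by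
  refine hA.clm_adjoint.mul (contDiff_iff_contDiffAt.mpr fun g => ?_)
  have := contDiffAt_ringInverse ℝ (n := n) (hunit g).unit
  rw [IsUnit.unit_spec] at this
  exact this.comp g (hA.mul hA.clm_adjoint).contDiffAt

theorem exists_summable_kernel_of_isUnit (T : X →L[ℂ] X)
    (hT : ∀ l : ℂ, ‖l‖ = 1 → IsUnit ((l • 1 - T) * adjoint (l • 1 - T))) :
    ∃ K : ℤ → X →L[ℂ] X, Summable (fun j => ‖K j‖) ∧
      ∀ j, K (j - 1) - T * K j = if j = 0 then 1 else 0 := by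
  -- `e θ = exp (θ * I)`, on the circle `AddCircle (2 * π - 0)` that `fourierCoeffOn` uses
  set e : ℝ → ℂ := fun θ => fourier 1 (θ : AddCircle (2 * π - 0))
  set A : ℝ → X →L[ℂ] X := fun θ => e θ • 1 - T
  set R : ℝ → X →L[ℂ] X := fun θ => adjoint (A θ) * Ring.inverse (A θ * adjoint (A θ))
  have hunit (θ : ℝ) : IsUnit (A θ * adjoint (A θ)) :=
    hT _ (by simp only [e, fourier_apply, Circle.norm_coe])
  have hAR (θ : ℝ) : A θ * R θ = 1 := by
    rw [← mul_assoc, Ring.mul_inverse_cancel _ (hunit θ)]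
  have he : ContDiff ℝ 2 e := by
    simp only [e, fourier_coe_apply]
    exact contDiff_exp.comp ((contDiff_const.mul ofRealCLM.contDiff).div_const _)
  have hA : ContDiff ℝ 2 A := (he.smul contDiff_const).sub contDiff_const
  have hR : ContDiff ℝ 2 R := contDiff_adjoint_mul_ringInverse hA hunit
  have hper : R.Periodic (2 * π - 0) := fun θ => by
    simp only [R, A, e, AddCircle.coe_add_period]
  refine ⟨fourierCoeffOn two_pi_pos R,
    summable_norm_fourierCoeffOn_of_contDiff _ hR hper, fun j => ?_⟩
  have hshift : fourierCoeffOn two_pi_pos R (j - 1) =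
      fourierCoeffOn two_pi_pos (fun θ => e θ • R θ) j :=
    (fourierCoeffOn_fourier_smul _ 1).symm
  have hmul : T * fourierCoeffOn two_pi_pos R j =
      fourierCoeffOn two_pi_pos (fun θ => T * R θ) j :=
    (ContinuousLinearMap.mul ℂ (X →L[ℂ] X) T).map_fourierCoeffOn _
      (hR.continuous.intervalIntegrable _ _)
  have hone : (fun θ => e θ • R θ - T * R θ) = fun _ => 1 :=
    funext fun θ => by rw [← hAR θ, sub_mul, smul_mul_assoc, one_mul]
  rw [hshift, hmul, ← fourierCoeffOn_sub _ (f := fun θ => e θ • R θ) (g := fun θ => T * R θ)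
    ((he.continuous.smul hR.continuous).intervalIntegrable _ _)
    ((continuous_const.mul hR.continuous).intervalIntegrable _ _), hone, fourierCoeffOn_const]

/-- An invertible bounded linear operator on a complex Hilbert space has the shadowing
property if and only if its right spectrum is disjoint from the unit circle. -/
theorem shadowing_iff_rightSpectrum_disjoint_unitCircle (T : (X →L[ℂ] X)ˣ) :
    ShadowingProperty T ↔
      RightSpectrum (T : X →L[ℂ] X) ∩ {l : ℂ | ‖l‖ = 1} = ∅ := by
  rw [Set.eq_empty_iff_forall_notMem]
  constructor
  · rintro hT l ⟨hl, hl1⟩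
    obtain ⟨K, hK⟩ := hT.hasBoundedSolutions.antilipschitz_adjoint hl1
    exact hl (exists_mul_eq_one_of_antilipschitz_adjoint hK)
  · intro h
    have hunit (l : ℂ) (hl : ‖l‖ = 1) :
        IsUnit ((l • 1 - (T : X →L[ℂ] X)) * adjoint (l • 1 - (T : X →L[ℂ] X))) := by
      obtain ⟨S, hS⟩ := not_not.mp fun hS => h l ⟨hS, hl⟩
      exact isUnit_mul_adjoint_of_antilipschitz (antilipschitz_adjoint_of_mul_eq_one hS)
    obtain ⟨K, hK, hKT⟩ := exists_summable_kernel_of_isUnit _ hunit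
    exact ShadowingProperty.of_hasBoundedSolutions (HasBoundedSolutions.of_kernel hK hKT)
end
end

section
/- Let X be a complex Hilbert space, let T be an invertible bounded linear operator on X with the shadowing property, and suppose λ ∈ σ_r(T) with |λ| = 1. Then a contradiction follows; that is, if T has the shadowing property, then λI − T has a bounded linear right inverse for every λ with |λ| = 1. -/
/-!
Fix `‖λ‖ = 1` and a small `b`. The sequence `x₀ = 0`, `xₙ₊₁ = T xₙ + λⁿ b`, extended by `0` to
negative times, is a pseudo-orbit; if `y` shadows it, then `cₙ = λ⁻ⁿ (xₙ - Tⁿ y)` is bounded and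
satisfies `λ cₙ₊₁ = T cₙ + b`, so the Cesàro means of `(cₙ)` stay in the unit ball while `λ - T`
maps them to points converging to `b`. Thus the closure of the image of the unit ball under
`A = λ - T` contains a ball of radius `δ`, which by duality gives `δ ‖z‖ ≤ ‖A* z‖`. Then `A A*` is
coercive, hence invertible, and `A* (A A*)⁻¹` is a bounded right inverse of `A`.
-/

open Filter Topology

noncomputable section

variable {X : Type*} [NormedAddCommGroup X] [InnerProductSpace ℂ X] [CompleteSpace X]

namespace ShadowingProperty

variable {Y : Type*} [NormedAddCommGroup Y] [NormedSpace ℂ Y] {T : (Y →L[ℂ] Y)ˣ}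

theorem exists_shadow_of_nat (hT : ShadowingProperty T) {ε : ℝ} (hε : 0 < ε) :
    ∃ δ > 0, ∀ x : ℕ → Y, x 0 = 0 → (∀ n, ‖x (n + 1) - (T : Y →L[ℂ] Y) (x n)‖ ≤ δ) →
      ∃ y : Y, ∀ n : ℕ, ‖x n - ((T : Y →L[ℂ] Y) ^ n) y‖ ≤ ε := by
  obtain ⟨δ, hδ, hshadow⟩ := hT ε hε
  refine ⟨δ, hδ, fun x hx0 hx => ?_⟩
  have hpseudo : ∀ n : ℤ, ‖x (n + 1).toNat - (T : Y →L[ℂ] Y) (x n.toNat)‖ ≤ δ := by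
    intro n
    rcases le_or_gt 0 n with hn | hn
    · rw [show (n + 1).toNat = n.toNat + 1 by omega]
      exact hx n.toNat
    · have h1 : (n + 1).toNat = 0 := by omega
      have h2 : n.toNat = 0 := by omega
      simp [h1, h2, hx0, hδ.le]
  obtain ⟨y, hy⟩ := hshadow (fun n => x n.toNat) hpseudo
  exact ⟨y, fun n => by simpa [Units.val_pow_eq_pow_val] using hy n⟩

theorem exists_bounded_seq_smul_succ_eq (hT : ShadowingProperty T) {l : ℂ} (hl : ‖l‖ = 1) :
    ∃ δ > 0, ∀ b : Y, ‖b‖ ≤ δ → ∃ c : ℕ → Y,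
      (∀ m, ‖c m‖ ≤ 1) ∧ ∀ m, l • c (m + 1) = (T : Y →L[ℂ] Y) (c m) + b := by
  obtain ⟨δ, hδ, hshadow⟩ := hT.exists_shadow_of_nat one_pos
  refine ⟨δ, hδ, fun b hb => ?_⟩
  set x : ℕ → Y := fun n => Nat.rec 0 (fun m xm => (T : Y →L[ℂ] Y) xm + l ^ m • b) n with hx
  obtain ⟨y, hy⟩ := hshadow x rfl fun n => by simpa [hx, norm_smul, hl] using hb
  have hl0 : l ≠ 0 := by rintro rfl; simp at hl
  refine ⟨fun m => (l ^ m)⁻¹ • (x m - ((T : Y →L[ℂ] Y) ^ m) y), fun m => ?_, fun m => ?_⟩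
  · simpa [norm_smul, hl] using hy m
  · simp only [hx, pow_succ', mul_apply_eq_comp, map_smul, map_sub, smul_sub, smul_add, smul_smul]
    rw [mul_inv, mul_inv_cancel_left₀ hl0, inv_mul_cancel_right₀ (pow_ne_zero m hl0),
      mul_inv_cancel₀ hl0, one_smul]
    abel

end ShadowingProperty

section Averaging

open Metric Finset

variable {𝕜 E : Type*} [RCLike 𝕜] [NormedAddCommGroup E] [NormedSpace 𝕜 E]
  {T : E →L[𝕜] E} {l : 𝕜} {b : E} {c : ℕ → E}

theorem sum_range_smul_sub_apply_eq (hc : ∀ m, l • c (m + 1) = T (c m) + b) (N : ℕ) :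
    (l • (1 : E →L[𝕜] E) - T) (∑ m ∈ range N, c m) = N • b + l • (c 0 - c N) := by
  have hstep : ∀ m, (l • (1 : E →L[𝕜] E) - T) (c m) = b + l • (c m - c (m + 1)) := by
    intro m
    simp only [sub_apply, smul_apply, one_apply_eq_self, smul_sub, hc]
    abel
  simp only [map_sum, hstep, sum_add_distrib, sum_const, card_range, ← smul_sum, sum_range_sub']

theorem mem_closure_image_closedBall_of_smul_succ_eq (hc_le : ∀ m, ‖c m‖ ≤ 1)
    (hc : ∀ m, l • c (m + 1) = T (c m) + b) :
    b ∈ closure ((l • (1 : E →L[𝕜] E) - T) '' closedBall 0 1) := by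
  set A : E →L[𝕜] E := l • 1 - T
  set v : ℕ → E := fun N => (N : 𝕜)⁻¹ • ∑ m ∈ range N, c m
  have hv : ∀ N, 0 < N → ‖v N‖ ≤ 1 := by
    intro N hN
    have hsum : ‖∑ m ∈ range N, c m‖ ≤ N := by
      simpa using norm_sum_le_of_le (range N) fun m _ => hc_le m
    calc ‖v N‖ = (N : ℝ)⁻¹ * ‖∑ m ∈ range N, c m‖ := by simp [v, norm_smul]
      _ ≤ (N : ℝ)⁻¹ * N := by gcongr
      _ = 1 := inv_mul_cancel₀ (by positivity)
  have hAv : ∀ N, 0 < N → A (v N) - b = (N : 𝕜)⁻¹ • l • (c 0 - c N) := by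
    intro N hN
    rw [map_smul, sum_range_smul_sub_apply_eq hc, smul_add, ← Nat.cast_smul_eq_nsmul 𝕜, smul_smul,
      inv_mul_cancel₀ (by exact_mod_cast hN.ne'), one_smul, add_sub_cancel_left]
  have hlim : Tendsto (fun N => A (v N)) atTop (𝓝 b) := by
    refine tendsto_sub_nhds_zero_iff.1 <|
      squeeze_zero_norm' ?_ (tendsto_const_div_atTop_nhds_zero_nat (‖l‖ * 2))
    filter_upwards [eventually_gt_atTop 0] with N hN
    have hdiff : ‖c 0 - c N‖ ≤ 2 := (norm_sub_le _ _).trans (by linarith [hc_le 0, hc_le N])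
    rw [hAv N hN, norm_smul, norm_smul, norm_inv, RCLike.norm_natCast, inv_mul_eq_div]
    gcongr
  refine mem_closure_of_tendsto hlim (eventually_atTop.2 ⟨1, fun N hN => ?_⟩)
  exact Set.mem_image_of_mem _ (mem_closedBall_zero_iff.2 (hv N hN))

end Averaging

section Adjoint

open Metric ContinuousLinearMap
open scoped InnerProductSpace

variable {𝕜 E F : Type*} [RCLike 𝕜] [NormedAddCommGroup E] [InnerProductSpace 𝕜 E]
  [CompleteSpace E] [NormedAddCommGroup F] [InnerProductSpace 𝕜 F] [CompleteSpace F]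

theorem mul_norm_le_norm_adjoint_apply (A : E →L[𝕜] F) {δ : ℝ} (hδ : 0 ≤ δ)
    (h : closedBall (0 : F) δ ⊆ closure (A '' closedBall 0 1)) (y : F) :
    δ * ‖y‖ ≤ ‖adjoint A y‖ := by
  have hbound : ∀ b ∈ closure (A '' closedBall 0 1), ‖⟪b, y⟫_𝕜‖ ≤ ‖adjoint A y‖ := by
    refine closure_minimal ?_ <|
      isClosed_le (continuous_id.inner continuous_const).norm continuous_const
    rintro _ ⟨v, hv, rfl⟩
    change ‖⟪A v, y⟫_𝕜‖ ≤ ‖adjoint A y‖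
    rw [← adjoint_inner_right]
    calc ‖⟪v, adjoint A y⟫_𝕜‖ ≤ ‖v‖ * ‖adjoint A y‖ := norm_inner_le_norm _ _
      _ ≤ ‖adjoint A y‖ := mul_le_of_le_one_left (norm_nonneg _) (mem_closedBall_zero_iff.1 hv)
  rcases eq_or_ne y 0 with rfl | hy
  · simp
  have hy' : 0 < ‖y‖ := norm_pos_iff.2 hy
  set b : F := ((δ / ‖y‖ : ℝ) : 𝕜) • y
  have hb : ‖b‖ = δ := by
    rw [norm_smul, RCLike.norm_ofReal, abs_of_nonneg (by positivity), div_mul_cancel₀ _ hy'.ne']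
  have hinner : ‖⟪b, y⟫_𝕜‖ = δ * ‖y‖ := by
    rw [inner_smul_left, norm_mul, RCLike.norm_conj, RCLike.norm_ofReal,
      abs_of_nonneg (by positivity), inner_self_eq_norm_sq_to_K, norm_pow, RCLike.norm_ofReal,
      abs_norm]
    field_simp
  exact hinner ▸ hbound b (h (mem_closedBall_zero_iff.2 hb.le))

theorem exists_comp_eq_id_of_mul_norm_le_norm_adjoint_apply (A : E →L[𝕜] F) {c : ℝ}
    (hc : 0 < c) (h : ∀ y, c * ‖y‖ ≤ ‖adjoint A y‖) :
    ∃ S : F →L[𝕜] E, A ∘L S = ContinuousLinearMap.id 𝕜 F := by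
  have hunit : IsUnit (A ∘L adjoint A) := by
    refine isUnit_of_forall_le_norm_inner_map _ (c := ⟨c ^ 2, by positivity⟩)
      (NNReal.coe_pos.1 (pow_pos hc 2)) fun y => ?_
    have hinner : ⟪(A ∘L adjoint A) y, y⟫_𝕜 = ((‖adjoint A y‖ ^ 2 : ℝ) : 𝕜) := by
      rw [comp_apply, ← adjoint_inner_right, inner_self_eq_norm_sq_to_K]
      push_cast
      rfl
    calc ‖y‖ ^ 2 * c ^ 2 = (c * ‖y‖) ^ 2 := by ring
      _ ≤ ‖adjoint A y‖ ^ 2 := pow_le_pow_left₀ (by positivity) (h y) 2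
      _ = ‖⟪(A ∘L adjoint A) y, y⟫_𝕜‖ := by
        rw [hinner, RCLike.norm_ofReal, abs_of_nonneg (by positivity)]
  obtain ⟨u, hu⟩ := hunit
  refine ⟨adjoint A ∘L ↑u⁻¹, ?_⟩
  rw [← comp_assoc, ← hu]
  exact u.mul_inv

end Adjoint

/-- If an invertible operator `T` on a complex Hilbert space has the shadowing property,
then for every `λ` on the unit circle the operator `λI - T` has a bounded linear right
inverse (i.e. no unimodular `λ` belongs to the right spectrum of `T`). -/
theorem rightInvertible_of_shadowing (T : (X →L[ℂ] X)ˣ)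
    (hT : ShadowingProperty T) :
    ∀ l : ℂ, ‖l‖ = 1 →
      ∃ S : X →L[ℂ] X, (l • (1 : X →L[ℂ] X) - (T : X →L[ℂ] X)) * S = 1 := by
  intro l hl
  obtain ⟨δ, hδ, hsolve⟩ := hT.exists_bounded_seq_smul_succ_eq hl
  have hball : Metric.closedBall (0 : X) δ ⊆
      closure ((l • (1 : X →L[ℂ] X) - (T : X →L[ℂ] X)) '' Metric.closedBall 0 1) := by
    intro b hb
    obtain ⟨c, hc_le, hc⟩ := hsolve b (mem_closedBall_zero_iff.1 hb)
    exact mem_closure_image_closedBall_of_smul_succ_eq hc_le hc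
  exact exists_comp_eq_id_of_mul_norm_le_norm_adjoint_apply _ hδ
    (mul_norm_le_norm_adjoint_apply _ hδ.le hball)
end
end

section
/- Let X be a complex Hilbert space and let T be an invertible bounded linear operator on X. Define the bounded linear operator 𝒮 on ℓ∞(ℤ, X) by 𝒮((x_n)_{n∈ℤ}) = (x_{n+1} − T x_n)_{n∈ℤ}, and the bounded linear operator ℬ on ℓ¹(ℤ, X) by ℬ((y_n)_{n∈ℤ}) = (y_{n−1} − T* y_n)_{n∈ℤ}. Then 𝒮 is surjective if and only if ℬ is bounded below. -/
/-!
Pairing `x ∈ ℓ∞(ℤ, X)` with `y ∈ ℓ¹(ℤ, X)` by `⟨x, y⟩ = ∑ ⟪x n, y n⟫` identifies `ℓ∞(ℤ, X)`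
conjugate-linearly with the dual of `ℓ¹(ℤ, X)` (Riesz representation in each coordinate), and
summation by parts gives `⟨𝒮 x, y⟩ = ⟨x, ℬ y⟩`: `𝒮` is the transpose of `ℬ`. If `𝒮` is onto, the
open mapping theorem yields a preimage of norm `≤ C` of the sequence `y n / ‖y n‖`, which pairs with
`y` to `‖y‖`; hence `‖y‖ ≤ C ‖ℬ y‖`. If `ℬ` is bounded below, then by Hahn–Banach on the range of
`ℬ` every functional `⟨b, ·⟩` factors as `φ ∘ ℬ`, and the representative `x` of `φ` solves `𝒮 x = b`.
-/

open Filter Topology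

noncomputable section

open scoped ENNReal lp InnerProductSpace

theorem ContinuousLinearMap.exists_strongDual_comp_eq_of_boundedBelow {𝕜 E F : Type*} [RCLike 𝕜]
    [NormedAddCommGroup E] [NormedSpace 𝕜 E] [NormedAddCommGroup F] [NormedSpace 𝕜 F]
    (B : E →L[𝕜] F) {α : ℝ} (hα : 0 < α) (hB : ∀ y, α * ‖y‖ ≤ ‖B y‖) (g : StrongDual 𝕜 E) :
    ∃ h : StrongDual 𝕜 F, h ∘L B = g := by
  have hinj : Function.Injective B := (injective_iff_map_eq_zero B).2 fun y hy =>
    norm_le_zero_iff.1 <| le_of_mul_le_mul_left (by simpa [hy] using hB y) hα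
  let e := LinearEquiv.ofInjective B.toLinearMap hinj
  have hbound (r : LinearMap.range B.toLinearMap) : ‖g (e.symm r)‖ ≤ ‖g‖ / α * ‖r‖ := by
    have hr : B (e.symm r) = r := congrArg Subtype.val (e.apply_symm_apply r)
    calc ‖g (e.symm r)‖ ≤ ‖g‖ * ‖e.symm r‖ := g.le_opNorm _
      _ ≤ ‖g‖ * (‖B (e.symm r)‖ / α) := by gcongr; rw [le_div_iff₀' hα]; exact hB _
      _ = ‖g‖ / α * ‖r‖ := by rw [hr, Submodule.coe_norm]; ring
  obtain ⟨h, hext, -⟩ := exists_extension_norm_eq _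
    ((g.toLinearMap ∘ₗ e.symm.toLinearMap).mkContinuous _ hbound)
  refine ⟨h, ContinuousLinearMap.ext fun y => ?_⟩
  simpa [e] using hext (e y)

namespace lp

variable {ι 𝕜 E : Type*} [RCLike 𝕜] [NormedAddCommGroup E] [InnerProductSpace 𝕜 E]

variable (𝕜) in
def innerDual (x : ℓ^∞(ι, E)) : StrongDual 𝕜 ℓ¹(ι, E) :=
  tsumCLM 𝕜 ι 𝕜 ∘L mapCLM 1 (fun i => innerSL 𝕜 (x i)) (norm_nonneg x)
    fun i => (innerSL_apply_norm 𝕜 (x i)).trans_le (norm_apply_le_norm ENNReal.top_ne_zero x i)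

theorem innerDual_apply (x : ℓ^∞(ι, E)) (y : ℓ¹(ι, E)) :
    innerDual 𝕜 x y = ∑' i, ⟪x i, y i⟫_𝕜 := rfl

theorem norm_innerDual_le (x : ℓ^∞(ι, E)) : ‖innerDual 𝕜 x‖ ≤ ‖x‖ :=
  (ContinuousLinearMap.opNorm_comp_le _ _).trans <| by
    simpa using mul_le_mul norm_tsumCLM_le (norm_mapCLM_le _ _ _ _) (norm_nonneg _) zero_le_one

theorem innerDual_single [DecidableEq ι] (x : ℓ^∞(ι, E)) (i : ι) (v : E) :
    innerDual 𝕜 x (lp.single 1 i v) = ⟪x i, v⟫_𝕜 := by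
  rw [innerDual_apply, tsum_eq_single i fun j hj => by simp [hj]]
  simp

theorem innerDual_injective :
    Function.Injective (innerDual 𝕜 : ℓ^∞(ι, E) → StrongDual 𝕜 ℓ¹(ι, E)) := by
  classical
  exact fun x x' h => lp.ext <| funext fun i => ext_inner_right 𝕜 fun v => by
    simpa only [innerDual_single] using DFunLike.congr_fun h (lp.single 1 i v)

theorem innerDual_surjective [CompleteSpace E] :
    Function.Surjective (innerDual 𝕜 : ℓ^∞(ι, E) → StrongDual 𝕜 ℓ¹(ι, E)) := by
  classical
  intro g
  let φ (i : ι) : StrongDual 𝕜 E := g ∘L singleContinuousLinearMap 𝕜 (fun _ => E) 1 i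
  have hφ (i : ι) : ‖φ i‖ ≤ ‖g‖ := ContinuousLinearMap.opNorm_le_bound _ (norm_nonneg g)
    fun v => by simpa [φ, lp.norm_single] using g.le_opNorm (lp.single 1 i v)
  let x : ℓ^∞(ι, E) := ⟨fun i => (InnerProductSpace.toDual 𝕜 E).symm (φ i),
    memℓp_infty ⟨‖g‖, by rintro _ ⟨i, rfl⟩; simpa using hφ i⟩⟩
  refine ⟨x, ext_continuousLinearMap ENNReal.one_ne_top fun i => ?_⟩
  ext v
  simp [innerDual_single, x, φ, InnerProductSpace.toDual_symm_apply]

theorem exists_innerDual_eq_norm (y : ℓ¹(ι, E)) :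
    ∃ b : ℓ^∞(ι, E), ‖b‖ ≤ 1 ∧ innerDual 𝕜 b y = (‖y‖ : 𝕜) := by
  have hnorm (v : E) : ‖((‖v‖ : 𝕜)⁻¹ • v)‖ ≤ 1 := by
    rcases eq_or_ne v 0 with rfl | hv
    · simp
    · simp [norm_smul, hv]
  have hinner (v : E) : ⟪(‖v‖ : 𝕜)⁻¹ • v, v⟫_𝕜 = ‖v‖ := by
    rcases eq_or_ne v 0 with rfl | hv
    · simp
    · rw [inner_smul_left, inner_self_eq_norm_sq_to_K, map_inv₀, RCLike.conj_ofReal]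
      field_simp
  let b : ℓ^∞(ι, E) := ⟨fun i => (‖y i‖ : 𝕜)⁻¹ • y i,
    memℓp_infty ⟨1, by rintro _ ⟨i, rfl⟩; exact hnorm _⟩⟩
  refine ⟨b, norm_le_of_forall_le zero_le_one fun i => hnorm _, ?_⟩
  rw [innerDual_apply, norm_eq_tsum_rpow (by norm_num) y]
  simp [b, hinner, RCLike.ofReal_tsum]

theorem summable_inner_of_forall_norm_le {a : ι → E} {C : ℝ} (ha : ∀ i, ‖a i‖ ≤ C)
    (y : ℓ¹(ι, E)) : Summable fun i => ⟪a i, y i⟫_𝕜 :=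
  .of_norm_bounded (by simpa using ((lp.memℓp y).summable (by norm_num)).mul_left C) fun i =>
    (norm_inner_le_norm _ _).trans (mul_le_mul_of_nonneg_right (ha i) (norm_nonneg _))

theorem innerDual_eq_of_shift_sub [CompleteSpace E] (T : E →L[𝕜] E) {x x' : ℓ^∞(ℤ, E)}
    {y y' : ℓ¹(ℤ, E)} (hx : ∀ n, x' n = x (n + 1) - T (x n))
    (hy : ∀ n, y' n = y (n - 1) - ContinuousLinearMap.adjoint T (y n)) :
    innerDual 𝕜 x' y = innerDual 𝕜 x y' := by
  have hxn (n : ℤ) : ‖x n‖ ≤ ‖x‖ := norm_apply_le_norm ENNReal.top_ne_zero x n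
  have hsucc := summable_inner_of_forall_norm_le (𝕜 := 𝕜) (fun n => hxn (n + 1)) y
  have hT := summable_inner_of_forall_norm_le (𝕜 := 𝕜) (fun n => T.le_opNorm_of_le (hxn n)) y
  have hpred : Summable fun n => ⟪x n, y (n - 1)⟫_𝕜 := by
    rw [← (Equiv.addRight 1).summable_iff]; simpa [Function.comp_def] using hsucc
  have hshift : ∑' n, ⟪x n, y (n - 1)⟫_𝕜 = ∑' n, ⟪x (n + 1), y n⟫_𝕜 := by
    rw [← (Equiv.addRight 1).tsum_eq]; simp
  simp only [innerDual_apply, hx, hy, inner_sub_left, inner_sub_right,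
    ContinuousLinearMap.adjoint_inner_right]
  rw [hsucc.tsum_sub hT, hpred.tsum_sub hT, hshift]

section Transpose

variable [CompleteSpace E] {S : ℓ^∞(ι, E) →L[𝕜] ℓ^∞(ι, E)} {B : ℓ¹(ι, E) →L[𝕜] ℓ¹(ι, E)}

theorem boundedBelow_of_surjective_of_innerDual
    (hSB : ∀ x y, innerDual 𝕜 (S x) y = innerDual 𝕜 x (B y)) (hS : Function.Surjective S) :
    ∃ α > (0 : ℝ), ∀ y, α * ‖y‖ ≤ ‖B y‖ := by
  obtain ⟨C, hC, hpre⟩ := S.exists_preimage_norm_le hS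
  refine ⟨C⁻¹, inv_pos.2 hC, fun y => (inv_mul_le_iff₀ hC).2 ?_⟩
  obtain ⟨b, hb, hby⟩ := exists_innerDual_eq_norm (𝕜 := 𝕜) y
  obtain ⟨x, rfl, hx⟩ := hpre b
  calc ‖y‖ = ‖innerDual 𝕜 x (B y)‖ := by rw [← hSB, hby, RCLike.norm_ofReal, abs_norm]
    _ ≤ ‖x‖ * ‖B y‖ := ((innerDual 𝕜 x).le_opNorm _).trans (by gcongr; exact norm_innerDual_le x)
    _ ≤ C * ‖B y‖ := by gcongr; simpa using hx.trans (mul_le_mul_of_nonneg_left hb hC.le)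

theorem surjective_of_boundedBelow_of_innerDual
    (hSB : ∀ x y, innerDual 𝕜 (S x) y = innerDual 𝕜 x (B y)) {α : ℝ} (hα : 0 < α)
    (hB : ∀ y, α * ‖y‖ ≤ ‖B y‖) : Function.Surjective S := by
  intro b
  obtain ⟨g, hg⟩ := B.exists_strongDual_comp_eq_of_boundedBelow hα hB (innerDual 𝕜 b)
  obtain ⟨x, rfl⟩ := innerDual_surjective g
  exact ⟨x, innerDual_injective <| ContinuousLinearMap.ext fun y => by rw [hSB, ← hg]; rfl⟩

end Transpose

end lp

variable {X : Type*} [NormedAddCommGroup X] [InnerProductSpace ℂ X] [CompleteSpace X]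

/-- If `𝒮` is the operator `(x_n) ↦ (x_{n+1} - T x_n)` on `ℓ∞(ℤ, X)` and `ℬ` is the
operator `(y_n) ↦ (y_{n-1} - T* y_n)` on `ℓ¹(ℤ, X)`, then `𝒮` is surjective if and only
if `ℬ` is bounded below. -/
theorem surjective_iff_boundedBelow (T : (X →L[ℂ] X)ˣ)
    (Sop : lp (fun _ : ℤ => X) ⊤ →L[ℂ] lp (fun _ : ℤ => X) ⊤)
    (Bop : lp (fun _ : ℤ => X) 1 →L[ℂ] lp (fun _ : ℤ => X) 1)
    (hS : ∀ (x : lp (fun _ : ℤ => X) ⊤) (n : ℤ),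
      (Sop x : ∀ _ : ℤ, X) n = (x : ∀ _ : ℤ, X) (n + 1) -
        (T : X →L[ℂ] X) ((x : ∀ _ : ℤ, X) n))
    (hB : ∀ (y : lp (fun _ : ℤ => X) 1) (n : ℤ),
      (Bop y : ∀ _ : ℤ, X) n = (y : ∀ _ : ℤ, X) (n - 1) -
        (ContinuousLinearMap.adjoint (T : X →L[ℂ] X)) ((y : ∀ _ : ℤ, X) n)) :
    Function.Surjective Sop ↔ ∃ α > (0 : ℝ), ∀ y, α * ‖y‖ ≤ ‖Bop y‖ := by
  have hSB (x y) : lp.innerDual ℂ (Sop x) y = lp.innerDual ℂ x (Bop y) :=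
    lp.innerDual_eq_of_shift_sub (T : X →L[ℂ] X) (hS x) (hB y)
  exact ⟨lp.boundedBelow_of_surjective_of_innerDual hSB,
    fun ⟨_, hα, hbelow⟩ => lp.surjective_of_boundedBelow_of_innerDual hSB hα hbelow⟩
end
end

section
/- Let X be a complex Hilbert space and let T be an invertible bounded linear operator on X. Then T has the shadowing property if and only if the bounded linear operator 𝒮 on ℓ∞(ℤ, X) defined by 𝒮((x_n)_{n∈ℤ}) = (x_{n+1} − T x_n)_{n∈ℤ} is surjective; that is, if and only if for every bounded sequence (z_n)_{n∈ℤ} in X there exists a bounded sequence (x_n)_{n∈ℤ} in X with x_{n+1} = T x_n + z_n for all n ∈ ℤ. -/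
open Filter Topology

noncomputable section

variable {X : Type*} [NormedAddCommGroup X] [InnerProductSpace ℂ X] [CompleteSpace X]

/-!
Every sequence `x` on `ℤ` solves `x (n + 1) = T (x n) + z n` for its own defect `z`, and two
solutions for the same defect differ by an orbit `n ↦ T ^ n y`. Hence shadowing says that small
defects admit solutions of norm at most `ε`, and rescaling turns this into bounded solutions for
all bounded defects. Conversely, if the difference operator `x ↦ (x (n + 1) - T (x n))` on
`ℓ∞(ℤ, X)` is onto, the open mapping theorem provides solutions of norm at most `K ‖z‖∞`;
subtracting such a solution from a `δ`-pseudo-orbit leaves a true orbit within `K δ` of it.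
-/

open scoped BoundedContinuousFunction

theorem Int.exists_forall_succ_eq_equiv {α : Type*} (e : ℤ → α ≃ α) (a : α) :
    ∃ x : ℤ → α, ∀ n, x (n + 1) = e n (x n) := by
  let x (n : ℤ) : α :=
    @Int.inductionOn' (fun _ => α) n 0 a (fun k _ y => e k y) (fun k _ y => (e (k - 1)).symm y)
  refine ⟨x, fun n => ?_⟩
  rcases le_or_gt 0 n with hn | hn
  · exact Int.inductionOn'_add_one hn
  · have h : x (n + 1 - 1) = (e (n + 1 - 1)).symm (x (n + 1)) :=
      Int.inductionOn'_sub_one (by omega)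
    rw [add_sub_cancel_right] at h
    exact ((e n).eq_symm_apply.mp h).symm

section Units

variable {R M : Type*} [Semiring R] [TopologicalSpace M] [AddCommMonoid M] [Module R M]

theorem ContinuousLinearMap.units_zpow_one_add_apply (T : (M →L[R] M)ˣ) (n : ℤ) (y : M) :
    ((T ^ (1 + n) : (M →L[R] M)ˣ) : M →L[R] M) y =
      (T : M →L[R] M) (((T ^ n : (M →L[R] M)ˣ) : M →L[R] M) y) := by
  rw [zpow_one_add]; rfl

theorem ContinuousLinearMap.eq_units_zpow_apply_of_forall_succ_eq (T : (M →L[R] M)ˣ) {w : ℤ → M}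
    (hw : ∀ n, w (n + 1) = (T : M →L[R] M) (w n)) (n : ℤ) :
    w n = ((T ^ n : (M →L[R] M)ˣ) : M →L[R] M) (w 0) := by
  induction n using Int.induction_on with
  | zero => simp
  | succ k ih => rw [hw, ih, add_comm, units_zpow_one_add_apply]
  | pred k ih =>
    apply (ContinuousLinearEquiv.unitsEquiv R M T).injective
    simp only [ContinuousLinearEquiv.unitsEquiv_apply]
    rw [← units_zpow_one_add_apply, ← hw, sub_add_cancel, add_sub_cancel, ih]

end Units

theorem ContinuousLinearMap.exists_forall_succ_eq_units_apply_add {R M : Type*} [Semiring R]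
    [TopologicalSpace M] [AddCommGroup M] [Module R M] (T : (M →L[R] M)ˣ) (z : ℤ → M) :
    ∃ x : ℤ → M, ∀ n, x (n + 1) = (T : M →L[R] M) (x n) + z n :=
  Int.exists_forall_succ_eq_equiv
    (fun n => (ContinuousLinearEquiv.unitsEquiv R M T).toEquiv.trans (Equiv.addRight (z n))) 0

section Difference

variable {𝕜 Y : Type*} [NontriviallyNormedField 𝕜] [NormedAddCommGroup Y] [NormedSpace 𝕜 Y]

variable (𝕜) in
def differenceOperator (T : Y →L[𝕜] Y) : (ℤ →ᵇ Y) →L[𝕜] (ℤ →ᵇ Y) :=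
  BoundedContinuousFunction.compContinuousCLM Y 𝕜 ⟨(· + 1), continuous_of_discreteTopology⟩ -
    T.compLeftContinuousBounded ℤ

@[simp]
theorem differenceOperator_apply (T : Y →L[𝕜] Y) (x : ℤ →ᵇ Y) (n : ℤ) :
    differenceOperator 𝕜 T x n = x (n + 1) - T (x n) := rfl

theorem differenceOperator_surjective {T : Y →L[𝕜] Y}
    (h : ∀ z : ℤ → Y, (∃ C : ℝ, ∀ n, ‖z n‖ ≤ C) →
      ∃ x : ℤ → Y, (∃ C : ℝ, ∀ n, ‖x n‖ ≤ C) ∧ ∀ n, x (n + 1) = T (x n) + z n) :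
    Function.Surjective (differenceOperator 𝕜 T) := by
  intro z
  obtain ⟨x, ⟨C, hxC⟩, hx⟩ := h z ⟨‖z‖, z.norm_coe_le_norm⟩
  refine ⟨.ofNormedAddCommGroup x continuous_of_discreteTopology C hxC, ?_⟩
  ext n
  simp [hx]

end Difference

section Shadowing

variable {Y : Type*} [NormedAddCommGroup Y] [NormedSpace ℂ Y]

theorem ShadowingProperty.exists_bounded_solution_of_norm_le {T : (Y →L[ℂ] Y)ˣ}
    (h : ShadowingProperty T) :
    ∃ δ > (0 : ℝ), ∀ z : ℤ → Y, (∀ n, ‖z n‖ ≤ δ) →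
      ∃ x : ℤ → Y, (∀ n, ‖x n‖ ≤ 1) ∧ ∀ n, x (n + 1) = (T : Y →L[ℂ] Y) (x n) + z n := by
  obtain ⟨δ, hδ, hshadow⟩ := h 1 one_pos
  refine ⟨δ, hδ, fun z hz => ?_⟩
  obtain ⟨x, hx⟩ := ContinuousLinearMap.exists_forall_succ_eq_units_apply_add T z
  obtain ⟨y, hy⟩ := hshadow x fun n => by simpa [hx] using hz n
  refine ⟨fun n => x n - ((T ^ n : (Y →L[ℂ] Y)ˣ) : Y →L[ℂ] Y) y, hy, fun n => ?_⟩
  show x (n + 1) - _ = _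
  rw [hx, add_comm n 1, ContinuousLinearMap.units_zpow_one_add_apply, map_sub]
  abel

/-- Rescaling the defect of a bounded solution rescales the solution, so small defects suffice. -/
theorem ShadowingProperty.exists_bounded_solution {T : (Y →L[ℂ] Y)ˣ} (h : ShadowingProperty T)
    (z : ℤ → Y) (hz : ∃ C : ℝ, ∀ n, ‖z n‖ ≤ C) :
    ∃ x : ℤ → Y, (∃ C : ℝ, ∀ n, ‖x n‖ ≤ C) ∧ ∀ n, x (n + 1) = (T : Y →L[ℂ] Y) (x n) + z n := by
  obtain ⟨δ, hδ, hsmall⟩ := h.exists_bounded_solution_of_norm_le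
  obtain ⟨C, hC⟩ := hz
  set r : ℝ := δ / max C 1
  have hr : 0 < r := by positivity
  obtain ⟨x, hx1, hx⟩ := hsmall (fun n => (r : ℂ) • z n) fun n => by
    rw [norm_smul, Complex.norm_real, Real.norm_of_nonneg hr.le]
    calc r * ‖z n‖ ≤ r * max C 1 := by gcongr; exact (hC n).trans (le_max_left _ _)
      _ = δ := div_mul_cancel₀ _ (by positivity)
  refine ⟨fun n => (r⁻¹ : ℂ) • x n, ⟨‖(r⁻¹ : ℂ)‖, fun n => ?_⟩, fun n => ?_⟩
  · rw [norm_smul]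
    exact mul_le_of_le_one_right (norm_nonneg _) (hx1 n)
  · have hr' : (r : ℂ) ≠ 0 := by exact_mod_cast hr.ne'
    simp only [hx, map_smul, smul_add, smul_smul, inv_mul_cancel₀ hr', one_smul]

theorem shadowingProperty_of_surjective_differenceOperator [CompleteSpace Y] {T : (Y →L[ℂ] Y)ˣ}
    (hS : Function.Surjective (differenceOperator ℂ (T : Y →L[ℂ] Y))) : ShadowingProperty T := by
  obtain ⟨K, hK, hpreimage⟩ := (differenceOperator ℂ (T : Y →L[ℂ] Y)).exists_preimage_norm_le hS
  intro ε hε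
  refine ⟨ε / K, by positivity, fun x hx => ?_⟩
  let z : ℤ →ᵇ Y := .ofNormedAddCommGroup (fun n => x (n + 1) - (T : Y →L[ℂ] Y) (x n))
    continuous_of_discreteTopology (ε / K) hx
  obtain ⟨u, hu, hu_norm⟩ := hpreimage z
  have hu_le : ‖u‖ ≤ ε :=
    calc ‖u‖ ≤ K * ‖z‖ := hu_norm
      _ ≤ K * (ε / K) := by
        gcongr; exact BoundedContinuousFunction.norm_ofNormedAddCommGroup_le _ (by positivity) _
      _ = ε := mul_div_cancel₀ _ hK.ne'
  have horbit : ∀ n, x (n + 1) - u (n + 1) = (T : Y →L[ℂ] Y) (x n - u n) := fun n => by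
    have hun := DFunLike.congr_fun hu n
    simp only [differenceOperator_apply, z, BoundedContinuousFunction.coe_ofNormedAddCommGroup]
      at hun
    rw [map_sub, sub_eq_sub_iff_sub_eq_sub]
    exact hun.symm
  refine ⟨x 0 - u 0, fun n => ?_⟩
  rw [← ContinuousLinearMap.eq_units_zpow_apply_of_forall_succ_eq T (w := fun n => x n - u n)
    horbit n, sub_sub_cancel]
  exact (u.norm_coe_le_norm n).trans hu_le

end Shadowing

/-- An invertible operator `T` on a complex Hilbert space has the shadowing property
if and only if the operator `(x_n) ↦ (x_{n+1} - T x_n)` on `ℓ∞(ℤ, X)` is surjective,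
i.e. for every bounded sequence `(z_n)` there is a bounded sequence `(x_n)` with
`x_{n+1} = T x_n + z_n` for all `n`. -/
theorem shadowing_iff_surjective (T : (X →L[ℂ] X)ˣ) :
    ShadowingProperty T ↔
      ∀ z : ℤ → X, (∃ C : ℝ, ∀ n : ℤ, ‖z n‖ ≤ C) →
        ∃ x : ℤ → X, (∃ C : ℝ, ∀ n : ℤ, ‖x n‖ ≤ C) ∧
          ∀ n : ℤ, x (n + 1) = (T : X →L[ℂ] X) (x n) + z n :=
  ⟨fun h z hz => h.exists_bounded_solution z hz,
    fun h => shadowingProperty_of_surjective_differenceOperator (differenceOperator_surjective h)⟩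
end
end

section
/- Let X be a complex Banach space and let T be an invertible bounded linear operator on X. If there exists a bounded linear operator B : X → X such that limsup_{n→∞} ‖Tⁿ B‖^{1/n} < 1 and limsup_{n→∞} ‖T⁻ⁿ(I − B)‖^{1/n} < 1, then T has the shadowing property. -/
/-! The splitting yields a bounded solution operator for the inhomogeneous equation
`d (n + 1) = T d n + e n`: propagate the past of `e` forward through `B`, where `Tⁿ B` decays
geometrically, and its future backward through `1 - B`, where `T⁻ⁿ (1 - B)` decays:
`d n = ∑_{m ≥ 0} Tᵐ B e (n - 1 - m) - ∑_{j ≥ 0} T^{-(j+1)} (1 - B) e (n + j)`.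
By the root test both operator series converge absolutely, so `‖d n‖ ≤ K sup ‖e‖`.
For a `δ`-pseudo-orbit `x` with errors `e n = x (n + 1) - T x n`, the sequence `x - d` is a true
orbit, and it stays within `K δ` of `x`. -/

open Filter Topology

noncomputable section

variable {X : Type*} [NormedAddCommGroup X] [NormedSpace ℂ X] [CompleteSpace X]

-- `hbdd` is needed: the `limsup` of a real sequence unbounded above is a junk value.
lemma summable_of_limsup_rpow_lt_one {a : ℕ → ℝ} (ha : ∀ n, 0 ≤ a n)
    (hbdd : IsBoundedUnder (· ≤ ·) atTop (fun n : ℕ => a n ^ ((1 : ℝ) / n)))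
    (h : limsup (fun n : ℕ => a n ^ ((1 : ℝ) / n)) atTop < 1) : Summable a := by
  obtain ⟨r, hr₀, hr₁⟩ := exists_between (max_lt h one_pos)
  have hlt : ∀ᶠ n : ℕ in atTop, a n ^ ((1 : ℝ) / n) < r :=
    eventually_lt_of_limsup_lt ((le_max_left _ _).trans_lt hr₀) hbdd
  refine Summable.of_norm_bounded_eventually_nat
    (summable_geometric_of_lt_one ((le_max_right _ _).trans hr₀.le) hr₁) ?_
  filter_upwards [hlt, eventually_ne_atTop 0] with n hn hn₀
  rw [Real.norm_of_nonneg (ha n), ← Real.rpow_inv_natCast_pow (ha n) hn₀, ← one_div]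
  exact pow_le_pow_left₀ (Real.rpow_nonneg (ha n) _) hn.le n

lemma isBoundedUnder_rpow_norm_pow_mul {R : Type*} [SeminormedRing R] (a b : R) :
    IsBoundedUnder (· ≤ ·) atTop (fun n : ℕ => ‖a ^ n * b‖ ^ ((1 : ℝ) / n)) := by
  refine isBoundedUnder_of_eventually_le (a := ‖a‖ * max 1 ‖b‖) ?_
  filter_upwards [eventually_gt_atTop 0] with n hn
  have hn' : (n : ℝ) ≠ 0 := by positivity
  calc ‖a ^ n * b‖ ^ ((1 : ℝ) / n)
      ≤ (‖a‖ ^ n * ‖b‖) ^ ((1 : ℝ) / n) := by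
        gcongr
        exact (norm_mul_le _ _).trans (by gcongr; exact norm_pow_le' a hn)
    _ = ‖a‖ * ‖b‖ ^ ((1 : ℝ) / n) := by
        rw [Real.mul_rpow (by positivity) (norm_nonneg _), ← Real.rpow_natCast,
          ← Real.rpow_mul (norm_nonneg _), mul_one_div_cancel hn', Real.rpow_one]
    _ ≤ ‖a‖ * max 1 ‖b‖ := by
        gcongr
        calc ‖b‖ ^ ((1 : ℝ) / n) ≤ max 1 ‖b‖ ^ ((1 : ℝ) / n) := by gcongr; exact le_max_right _ _
          _ ≤ max 1 ‖b‖ ^ (1 : ℝ) := by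
            gcongr
            · exact le_max_left _ _
            · rw [div_le_one (by positivity)]; exact_mod_cast hn
          _ = max 1 ‖b‖ := Real.rpow_one _

lemma summable_norm_pow_mul_of_limsup_lt_one {R : Type*} [SeminormedRing R] (a b : R)
    (h : limsup (fun n : ℕ => ‖a ^ n * b‖ ^ ((1 : ℝ) / n)) atTop < 1) :
    Summable (fun n : ℕ => ‖a ^ n * b‖) :=
  summable_of_limsup_rpow_lt_one (fun _ => norm_nonneg _) (isBoundedUnder_rpow_norm_pow_mul a b) h

lemma eq_zpow_smul_of_forall_succ {G α : Type*} [Group G] [MulAction G α] {g : G} {y : ℤ → α}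
    (h : ∀ n, y (n + 1) = g • y n) (n : ℤ) : y n = g ^ n • y 0 := by
  induction n using Int.induction_on with
  | zero => simp
  | succ k ih => rw [h, ih, ← mul_smul, ← zpow_one_add, add_comm]
  | pred k ih =>
    have hk := h (-k - 1)
    rw [sub_add_cancel] at hk
    rw [show g ^ (-(k : ℤ) - 1) = g⁻¹ * g ^ (-(k : ℤ)) by group, mul_smul, ← ih, hk,
      inv_smul_smul]

section

variable {𝕜 E F : Type*} [NontriviallyNormedField 𝕜] [NormedAddCommGroup E] [NormedSpace 𝕜 E]
  [NormedAddCommGroup F] [NormedSpace 𝕜 F] {e : ℤ → E} {δ : ℝ}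

lemma summable_apply_of_summable_norm [CompleteSpace F] {A : ℕ → E →L[𝕜] F}
    (hA : Summable (‖A ·‖)) {v : ℕ → E} (hv : ∀ m, ‖v m‖ ≤ δ) :
    Summable (fun m => A m (v m)) :=
  (hA.mul_right δ).of_norm_bounded fun m => (A m).le_of_opNorm_le_of_le le_rfl (hv m)

lemma norm_tsum_apply_le_of_summable_norm {A : ℕ → E →L[𝕜] F}
    (hA : Summable (‖A ·‖)) {v : ℕ → E} (hv : ∀ m, ‖v m‖ ≤ δ) :
    ‖∑' m, A m (v m)‖ ≤ (∑' m, ‖A m‖) * δ :=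
  tsum_of_norm_bounded (hA.hasSum.mul_right δ) fun m => (A m).le_of_opNorm_le_of_le le_rfl (hv m)

def pastSum (A P : E →L[𝕜] E) (e : ℤ → E) (n : ℤ) : E :=
  ∑' m : ℕ, (A ^ m * P) (e (n - 1 - m))

def futureSum (S Q : E →L[𝕜] E) (e : ℤ → E) (n : ℤ) : E :=
  ∑' j : ℕ, (S ^ (j + 1) * Q) (e (n + j))

lemma pastSum_succ [CompleteSpace E] {A P : E →L[𝕜] E} (hs : Summable fun m : ℕ => ‖A ^ m * P‖)
    (he : ∀ n, ‖e n‖ ≤ δ) (n : ℤ) :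
    pastSum A P e (n + 1) = A (pastSum A P e n) + P (e n) := by
  rw [pastSum, (summable_apply_of_summable_norm hs fun _ => he _).tsum_eq_zero_add, pastSum,
    A.map_tsum (summable_apply_of_summable_norm hs fun _ => he _), add_comm]
  congr 1
  · refine tsum_congr fun m => ?_
    rw [pow_succ', mul_assoc, mul_apply_eq_comp]
    congr 3
    push_cast
    ring
  · simp

lemma norm_pastSum_le {A P : E →L[𝕜] E} (hs : Summable fun m : ℕ => ‖A ^ m * P‖)
    (he : ∀ n, ‖e n‖ ≤ δ) (n : ℤ) :
    ‖pastSum A P e n‖ ≤ (∑' m : ℕ, ‖A ^ m * P‖) * δ :=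
  norm_tsum_apply_le_of_summable_norm hs fun _ => he _

lemma futureSum_succ [CompleteSpace E] {T S Q : E →L[𝕜] E} (hTS : T * S = 1)
    (hs : Summable fun j : ℕ => ‖S ^ j * Q‖) (he : ∀ n, ‖e n‖ ≤ δ) (n : ℤ) :
    T (futureSum S Q e n) = futureSum S Q e (n + 1) + Q (e n) := by
  have hs₁ := (summable_nat_add_iff 1).mpr hs
  rw [futureSum, T.map_tsum (summable_apply_of_summable_norm hs₁ fun _ => he _)]
  have hcancel : ∀ j : ℕ, T ((S ^ (j + 1) * Q) (e (n + j))) = (S ^ j * Q) (e (n + j)) := by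
    intro j
    rw [← mul_apply_eq_comp, pow_succ', ← mul_assoc, ← mul_assoc, hTS, one_mul]
  have hsum := summable_apply_of_summable_norm hs (v := fun j : ℕ => e (n + j)) fun _ => he _
  rw [tsum_congr hcancel, hsum.tsum_eq_zero_add, add_comm, futureSum]
  congr 1
  · refine tsum_congr fun j => ?_
    congr 2
    push_cast
    ring
  · simp

lemma norm_futureSum_le {S Q : E →L[𝕜] E} (hs : Summable fun j : ℕ => ‖S ^ j * Q‖)
    (he : ∀ n, ‖e n‖ ≤ δ) (n : ℤ) :
    ‖futureSum S Q e n‖ ≤ (∑' j : ℕ, ‖S ^ (j + 1) * Q‖) * δ :=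
  norm_tsum_apply_le_of_summable_norm ((summable_nat_add_iff 1).mpr hs) fun _ => he _

lemma exists_bounded_solution_of_summable_splitting [CompleteSpace E] (T : (E →L[𝕜] E)ˣ)
    {B : E →L[𝕜] E} (hB : Summable fun n : ℕ => ‖(T : E →L[𝕜] E) ^ n * B‖)
    (hI : Summable fun n : ℕ => ‖((T⁻¹ : (E →L[𝕜] E)ˣ) : E →L[𝕜] E) ^ n * (1 - B)‖) :
    ∃ K : ℝ, 0 ≤ K ∧ ∀ (δ : ℝ) (e : ℤ → E), (∀ n, ‖e n‖ ≤ δ) →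
      ∃ d : ℤ → E, (∀ n, d (n + 1) = (T : E →L[𝕜] E) (d n) + e n) ∧ ∀ n, ‖d n‖ ≤ K * δ := by
  set S := ((T⁻¹ : (E →L[𝕜] E)ˣ) : E →L[𝕜] E)
  refine ⟨(∑' m : ℕ, ‖(T : E →L[𝕜] E) ^ m * B‖) + ∑' j : ℕ, ‖S ^ (j + 1) * (1 - B)‖,
    by positivity, fun δ e he => ⟨fun n => pastSum T B e n - futureSum S (1 - B) e n,
      fun n => ?_, fun n => ?_⟩⟩
  · beta_reduce
    rw [pastSum_succ hB he, ← sub_eq_of_eq_add (futureSum_succ T.mul_inv hI he n), map_sub]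
    simp only [sub_apply, one_apply_eq_self]
    abel
  · rw [add_mul]
    exact (norm_sub_le _ _).trans (add_le_add (norm_pastSum_le hB he n) (norm_futureSum_le hI he n))

end

lemma shadowingProperty_of_exists_bounded_solution {E : Type*} [NormedAddCommGroup E]
    [NormedSpace ℂ E] (T : (E →L[ℂ] E)ˣ) {K : ℝ} (hK : 0 ≤ K)
    (hsolve : ∀ (δ : ℝ) (e : ℤ → E), (∀ n, ‖e n‖ ≤ δ) →
      ∃ d : ℤ → E, (∀ n, d (n + 1) = (T : E →L[ℂ] E) (d n) + e n) ∧ ∀ n, ‖d n‖ ≤ K * δ) :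
    ShadowingProperty T := by
  intro ε hε
  refine ⟨ε / (K + 1), by positivity, fun x hx => ?_⟩
  obtain ⟨d, hd_succ, hd_norm⟩ := hsolve _ (fun n => x (n + 1) - (T : E →L[ℂ] E) (x n)) hx
  have horbit : ∀ n, x n - d n = T ^ n • (x 0 - d 0) :=
    eq_zpow_smul_of_forall_succ fun n => by
      rw [hd_succ, Units.smul_def, ContinuousLinearMap.smul_def, map_sub]
      abel
  refine ⟨x 0 - d 0, fun n => ?_⟩
  calc ‖x n - ((T ^ n : (E →L[ℂ] E)ˣ) : E →L[ℂ] E) (x 0 - d 0)‖ = ‖d n‖ := by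
        rw [← ContinuousLinearMap.smul_def, ← Units.smul_def, ← horbit, sub_sub_cancel]
    _ ≤ K * (ε / (K + 1)) := hd_norm n
    _ ≤ ε := by
        rw [mul_div_assoc', div_le_iff₀ (by positivity)]
        linarith

/-- If there is a bounded operator `B` with
`limsup ‖Tⁿ B‖^{1/n} < 1` and `limsup ‖T⁻ⁿ (I - B)‖^{1/n} < 1`, then the invertible
operator `T` has the shadowing property. -/
theorem shadowing_of_splitting (T : (X →L[ℂ] X)ˣ) (B : X →L[ℂ] X)
    (h₁ : Filter.limsup
      (fun n : ℕ => ‖(T : X →L[ℂ] X) ^ n * B‖ ^ ((1 : ℝ) / n)) Filter.atTop < 1)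
    (h₂ : Filter.limsup
      (fun n : ℕ => ‖((T⁻¹ : (X →L[ℂ] X)ˣ) : X →L[ℂ] X) ^ n *
        (1 - B)‖ ^ ((1 : ℝ) / n)) Filter.atTop < 1) :
    ShadowingProperty T := by
  obtain ⟨K, hK, hsolve⟩ := exists_bounded_solution_of_summable_splitting T
    (summable_norm_pow_mul_of_limsup_lt_one _ _ h₁) (summable_norm_pow_mul_of_limsup_lt_one _ _ h₂)
  exact shadowingProperty_of_exists_bounded_solution T hK hsolve
end
end

section
/- Let X be a complex Banach space, let T be an invertible bounded linear operator on X, and let B : X → X be a bounded linear operator. Suppose there are constants K > 0 and 0 < q < 1 such that ‖Tᵏ B‖ ≤ K qᵏ and ‖T⁻ᵏ(I − B)‖ ≤ K qᵏ for all integers k ≥ 0. Then for every bounded sequence (z_n)_{n∈ℤ} in X, the sequence defined by x_n = Σ_{k=0}^∞ Tᵏ B z_{n−k−1} − Σ_{k=1}^∞ T⁻ᵏ(I − B) z_{n+k−1} is well defined, satisfies sup_{n∈ℤ} ‖x_n‖ ≤ K·(1+q)/(1−q)·sup_{n∈ℤ}‖z_n‖, and satisfies x_{n+1} = T x_n + z_n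 for all n ∈ ℤ. -/
/-!
Both series are dominated termwise by `K qᵏ · sup ‖z‖`, so they converge and their norms are
bounded by geometric sums. The recurrence comes from peeling off the first term of each series:
the past sum `Σ Tᵏ B z_{n-k-1}` satisfies `s_{n+1} = B z_n + T s_n`, while applying `T` to the
future sum `Σ T⁻⁽ᵏ⁺¹⁾ (I - B) z_{n+k}` gives `(I - B) z_n + t_{n+1}`; subtracting, the two pieces
`B z_n` and `(I - B) z_n` recombine into `z_n`.
-/

open Filter Topology

noncomputable section

variable {X : Type*} [NormedAddCommGroup X] [NormedSpace ℂ X] [CompleteSpace X]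

section GeometricDomination

variable {𝕜 E F : Type*} [NontriviallyNormedField 𝕜] [NormedAddCommGroup E] [NormedSpace 𝕜 E]
  [NormedAddCommGroup F] [NormedSpace 𝕜 F] {A : ℕ → E →L[𝕜] F} {x : ℕ → E} {K q M : ℝ}

lemma norm_apply_le_geometric (hA : ∀ k, ‖A k‖ ≤ K * q ^ k) (hx : ∀ k, ‖x k‖ ≤ M) (k : ℕ) :
    ‖A k (x k)‖ ≤ K * q ^ k * M :=
  (A k).le_opNorm_of_le (hx k) |>.trans <|
    mul_le_mul_of_nonneg_right (hA k) ((norm_nonneg _).trans (hx k))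

lemma summable_apply_of_norm_le_geometric [CompleteSpace F] (hq0 : 0 ≤ q) (hq1 : q < 1)
    (hA : ∀ k, ‖A k‖ ≤ K * q ^ k) (hx : ∀ k, ‖x k‖ ≤ M) :
    Summable fun k => A k (x k) :=
  .of_norm_bounded (((summable_geometric_of_lt_one hq0 hq1).mul_left K).mul_right M)
    (norm_apply_le_geometric hA hx)

lemma norm_tsum_apply_le_of_geometric (hq0 : 0 ≤ q) (hq1 : q < 1)
    (hA : ∀ k, ‖A k‖ ≤ K * q ^ k) (hx : ∀ k, ‖x k‖ ≤ M) :
    ‖∑' k, A k (x k)‖ ≤ K * M / (1 - q) := by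
  have hsum : HasSum (fun k => K * q ^ k * M) (K * (1 - q)⁻¹ * M) :=
    ((hasSum_geometric_of_lt_one hq0 hq1).mul_left K).mul_right M
  calc ‖∑' k, A k (x k)‖ ≤ K * (1 - q)⁻¹ * M :=
        tsum_of_norm_bounded hsum (norm_apply_le_geometric hA hx)
    _ = K * M / (1 - q) := by ring

end GeometricDomination

section Recurrence

variable {𝕜 E : Type*} [NontriviallyNormedField 𝕜] [NormedAddCommGroup E] [NormedSpace 𝕜 E]
  (A C : E →L[𝕜] E) (z : ℤ → E) (n : ℤ)

lemma tsum_pow_mul_apply_past_succ (hs : Summable fun k : ℕ => (A ^ k * C) (z (n - k - 1))) :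
    ∑' k : ℕ, (A ^ k * C) (z (n + 1 - k - 1)) =
      C (z n) + A (∑' k : ℕ, (A ^ k * C) (z (n - k - 1))) := by
  have hshift : ∀ k : ℕ, (A ^ (k + 1) * C) (z (n + 1 - ↑(k + 1) - 1)) =
      A ((A ^ k * C) (z (n - k - 1))) := fun k => by
    rw [pow_succ', mul_assoc, mul_apply_eq_comp]
    congr 3
    push_cast
    ring
  rw [tsum_eq_zero_add' ((A.summable hs).congr fun k => (hshift k).symm), funext hshift,
    A.map_tsum hs]
  simp

lemma apply_tsum_pow_succ_mul_apply_future_of_mul_eq_one {A' : E →L[𝕜] E} (hAA' : A * A' = 1)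
    (hs : Summable fun k : ℕ => (A' ^ (k + 1) * C) (z (n + k)))
    (hs' : Summable fun k : ℕ => (A' ^ (k + 1) * C) (z (n + 1 + k))) :
    A (∑' k : ℕ, (A' ^ (k + 1) * C) (z (n + k))) =
      C (z n) + ∑' k : ℕ, (A' ^ (k + 1) * C) (z (n + 1 + k)) := by
  have hcancel : ∀ k : ℕ, A ((A' ^ (k + 1) * C) (z (n + k))) = (A' ^ k * C) (z (n + k)) :=
    fun k => by
      rw [← mul_apply_eq_comp, pow_succ', ← mul_assoc, ← mul_assoc, hAA', one_mul]
  have hshift : ∀ k : ℕ, n + ↑(k + 1) = n + 1 + k := fun k => by push_cast; ring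
  rw [A.map_tsum hs, funext hcancel, tsum_eq_zero_add' (by simpa only [hshift] using hs')]
  simp only [hshift, pow_zero, one_mul, Nat.cast_zero, add_zero]

end Recurrence

theorem explicit_solution_of_difference_equation_general (T : (X →L[ℂ] X)ˣ) (B : X →L[ℂ] X)
    (K q : ℝ) (hq0 : 0 < q) (hq1 : q < 1)
    (hTB : ∀ k : ℕ, ‖(T : X →L[ℂ] X) ^ k * B‖ ≤ K * q ^ k)
    (hTIB : ∀ k : ℕ,
      ‖((T⁻¹ : (X →L[ℂ] X)ˣ) : X →L[ℂ] X) ^ k * (1 - B)‖ ≤ K * q ^ k)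
    (z : ℤ → X) (hz : BddAbove (Set.range fun n : ℤ => ‖z n‖)) :
    (∀ n : ℤ, Summable fun k : ℕ =>
      ((T : X →L[ℂ] X) ^ k * B) (z (n - k - 1))) ∧
    (∀ n : ℤ, Summable fun k : ℕ =>
      (((T⁻¹ : (X →L[ℂ] X)ˣ) : X →L[ℂ] X) ^ (k + 1) * (1 - B)) (z (n + k))) ∧
    (∀ n : ℤ,
      ‖(∑' k : ℕ, ((T : X →L[ℂ] X) ^ k * B) (z (n - k - 1))) -
        ∑' k : ℕ, (((T⁻¹ : (X →L[ℂ] X)ˣ) : X →L[ℂ] X) ^ (k + 1) * (1 - B)) (z (n + k))‖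
        ≤ K * (1 + q) / (1 - q) * ⨆ m : ℤ, ‖z m‖) ∧
    (∀ n : ℤ,
      ((∑' k : ℕ, ((T : X →L[ℂ] X) ^ k * B) (z ((n + 1) - k - 1))) -
        ∑' k : ℕ,
          (((T⁻¹ : (X →L[ℂ] X)ˣ) : X →L[ℂ] X) ^ (k + 1) * (1 - B)) (z ((n + 1) + k))) =
      (T : X →L[ℂ] X)
        ((∑' k : ℕ, ((T : X →L[ℂ] X) ^ k * B) (z (n - k - 1))) -
          ∑' k : ℕ,
            (((T⁻¹ : (X →L[ℂ] X)ˣ) : X →L[ℂ] X) ^ (k + 1) * (1 - B)) (z (n + k))) +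
        z n) := by
  have hM : ∀ m, ‖z m‖ ≤ ⨆ m : ℤ, ‖z m‖ := le_ciSup hz
  have hTIB_succ : ∀ k : ℕ, ‖((T⁻¹ : (X →L[ℂ] X)ˣ) : X →L[ℂ] X) ^ (k + 1) * (1 - B)‖ ≤
      K * q * q ^ k := fun k => (hTIB (k + 1)).trans_eq (by ring)
  have hpast n := summable_apply_of_norm_le_geometric hq0.le hq1 hTB fun k => hM (n - k - 1)
  have hfuture n := summable_apply_of_norm_le_geometric hq0.le hq1 hTIB_succ fun k => hM (n + k)
  refine ⟨hpast, hfuture, fun n => ?_, fun n => ?_⟩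
  · calc _ ≤ K * (⨆ m, ‖z m‖) / (1 - q) + K * q * (⨆ m, ‖z m‖) / (1 - q) :=
          (norm_sub_le _ _).trans <| add_le_add
            (norm_tsum_apply_le_of_geometric hq0.le hq1 hTB fun k => hM (n - k - 1))
            (norm_tsum_apply_le_of_geometric hq0.le hq1 hTIB_succ fun k => hM (n + k))
      _ = _ := by ring
  · rw [tsum_pow_mul_apply_past_succ _ _ _ _ (hpast n), map_sub,
      apply_tsum_pow_succ_mul_apply_future_of_mul_eq_one _ _ _ _ T.mul_inv (hfuture n) (hfuture (n + 1)),
      sub_apply, one_apply_eq_self]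
    abel

/-- If `‖Tᵏ B‖ ≤ K qᵏ` and `‖T⁻ᵏ (I - B)‖ ≤ K qᵏ` for all `k ≥ 0`, then for every
bounded sequence `(z_n)` the series defining
`x_n = Σ_{k≥0} Tᵏ B z_{n-k-1} - Σ_{k≥1} T⁻ᵏ (I - B) z_{n+k-1}` converge, the sequence
`(x_n)` satisfies `‖x_n‖ ≤ K (1+q)/(1-q) · sup_m ‖z_m‖` and
`x_{n+1} = T x_n + z_n` for all `n`. -/
theorem explicit_solution_of_difference_equation (T : (X →L[ℂ] X)ˣ) (B : X →L[ℂ] X)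
    (K q : ℝ) (hK : 0 < K) (hq0 : 0 < q) (hq1 : q < 1)
    (hTB : ∀ k : ℕ, ‖(T : X →L[ℂ] X) ^ k * B‖ ≤ K * q ^ k)
    (hTIB : ∀ k : ℕ,
      ‖((T⁻¹ : (X →L[ℂ] X)ˣ) : X →L[ℂ] X) ^ k * (1 - B)‖ ≤ K * q ^ k)
    (z : ℤ → X) (hz : BddAbove (Set.range fun n : ℤ => ‖z n‖)) :
    (∀ n : ℤ, Summable fun k : ℕ =>
      ((T : X →L[ℂ] X) ^ k * B) (z (n - k - 1))) ∧
    (∀ n : ℤ, Summable fun k : ℕ =>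
      (((T⁻¹ : (X →L[ℂ] X)ˣ) : X →L[ℂ] X) ^ (k + 1) * (1 - B)) (z (n + k))) ∧
    (∀ n : ℤ,
      ‖(∑' k : ℕ, ((T : X →L[ℂ] X) ^ k * B) (z (n - k - 1))) -
        ∑' k : ℕ, (((T⁻¹ : (X →L[ℂ] X)ˣ) : X →L[ℂ] X) ^ (k + 1) * (1 - B)) (z (n + k))‖
        ≤ K * (1 + q) / (1 - q) * ⨆ m : ℤ, ‖z m‖) ∧
    (∀ n : ℤ,
      ((∑' k : ℕ, ((T : X →L[ℂ] X) ^ k * B) (z ((n + 1) - k - 1))) -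
        ∑' k : ℕ,
          (((T⁻¹ : (X →L[ℂ] X)ˣ) : X →L[ℂ] X) ^ (k + 1) * (1 - B)) (z ((n + 1) + k))) =
      (T : X →L[ℂ] X)
        ((∑' k : ℕ, ((T : X →L[ℂ] X) ^ k * B) (z (n - k - 1))) -
          ∑' k : ℕ,
            (((T⁻¹ : (X →L[ℂ] X)ˣ) : X →L[ℂ] X) ^ (k + 1) * (1 - B)) (z (n + k))) +
        z n) :=
  explicit_solution_of_difference_equation_general T B K q hq0 hq1 hTB hTIB z hz
end
end

section
/- Let X be a complex Hilbert space, let T be an invertible bounded linear operator on X, and let α > 0. If Σ_{n∈ℤ} ‖y_{n−1} − T* y_n‖ ≥ α · Σ_{n∈ℤ} ‖y_n‖ for every sequence (y_n)_{n∈ℤ} in X with Σ_{n∈ℤ} ‖y_n‖ < ∞, then ‖(I − T*)x‖ ≥ α‖x‖ for every x ∈ X; in particular I − T* is bounded below. -/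
/-!
Testing the estimate on the sequence equal to `x` at `0, …, N` and to `0` elsewhere gives
`α (N + 1) ‖x‖ ≤ ‖T* x‖ + N ‖x - T* x‖ + ‖x‖`: only the two boundary terms of
`y (n - 1) - T* (y n)` differ from `x - T* x`. Dividing by `N` and letting `N → ∞` leaves
`α ‖x‖ ≤ ‖x - T* x‖`.
-/

open Filter Topology

noncomputable section

variable {X : Type*} [NormedAddCommGroup X] [InnerProductSpace ℂ X] [CompleteSpace X]

section BlockSeq

variable {E : Type*} [NormedAddCommGroup E]

def blockSeq (x : E) (N : ℕ) : ℤ → E :=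
  Set.indicator (Set.Icc 0 (N : ℤ)) fun _ => x

theorem blockSeq_of_mem {x : E} {N : ℕ} {n : ℤ} (hn : n ∈ Finset.Icc 0 (N : ℤ)) :
    blockSeq x N n = x :=
  Set.indicator_of_mem (Finset.coe_Icc 0 (N : ℤ) ▸ Finset.mem_coe.2 hn) _

theorem blockSeq_of_notMem {x : E} {N : ℕ} {n : ℤ} (hn : n ∉ Finset.Icc 0 (N : ℤ)) :
    blockSeq x N n = 0 :=
  Set.indicator_of_notMem (Finset.coe_Icc 0 (N : ℤ) ▸ Finset.mem_coe.not.2 hn) _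

theorem summable_norm_blockSeq (x : E) (N : ℕ) : Summable fun n => ‖blockSeq x N n‖ :=
  summable_of_ne_finset_zero fun _ hn => by rw [blockSeq_of_notMem hn, norm_zero]

theorem tsum_norm_blockSeq (x : E) (N : ℕ) : ∑' n, ‖blockSeq x N n‖ = (N + 1) * ‖x‖ := by
  rw [tsum_eq_sum fun _ hn => by rw [blockSeq_of_notMem hn, norm_zero],
    Finset.sum_congr rfl fun _ hn => by rw [blockSeq_of_mem hn]]
  simp [Int.card_Icc]

variable {F : Type*} [FunLike F E E] [ZeroHomClass F E E]

theorem tsum_norm_blockSeq_sub_map_shift (A : F) (x : E) (N : ℕ) :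
    ∑' n, ‖blockSeq x N (n - 1) - A (blockSeq x N n)‖ = ‖A x‖ + N * ‖x - A x‖ + ‖x‖ := by
  have hsupp : ∀ n ∉ Finset.Icc 0 ((N : ℤ) + 1),
      ‖blockSeq x N (n - 1) - A (blockSeq x N n)‖ = 0 := by
    intro n hn
    rw [Finset.mem_Icc] at hn
    rw [blockSeq_of_notMem (by rw [Finset.mem_Icc]; omega),
      blockSeq_of_notMem (by rw [Finset.mem_Icc]; omega), map_zero, sub_zero, norm_zero]
  have hmid : ∀ n ∈ Finset.Icc (1 : ℤ) N,
      ‖blockSeq x N (n - 1) - A (blockSeq x N n)‖ = ‖x - A x‖ := by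
    intro n hn
    rw [Finset.mem_Icc] at hn
    rw [blockSeq_of_mem (by rw [Finset.mem_Icc]; omega),
      blockSeq_of_mem (by rw [Finset.mem_Icc]; omega)]
  have hIcc : Finset.Icc 0 ((N : ℤ) + 1) =
      insert 0 (insert ((N : ℤ) + 1) (Finset.Icc 1 (N : ℤ))) := by
    ext n; simp only [Finset.mem_Icc, Finset.mem_insert]; omega
  rw [tsum_eq_sum hsupp, hIcc, Finset.sum_insert (by simp; omega), Finset.sum_insert (by simp),
    Finset.sum_congr rfl hmid,
    blockSeq_of_notMem (by simp), blockSeq_of_mem (by simp), blockSeq_of_mem (by simp),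
    blockSeq_of_notMem (by simp)]
  simp only [zero_sub, norm_neg, map_zero, sub_zero, Finset.sum_const, Int.card_Icc,
    add_sub_cancel_right, Int.toNat_natCast, nsmul_eq_mul]
  ring

end BlockSeq

theorem le_of_forall_nat_mul_le_mul_add {a b c : ℝ} (h : ∀ N : ℕ, N * a ≤ N * c + b) : a ≤ c := by
  by_contra! hca
  obtain ⟨N, hN⟩ := exists_nat_gt (b / (a - c))
  rw [div_lt_iff₀ (sub_pos.2 hca)] at hN
  linarith [h N]

theorem boundedBelow_of_l1_estimate_general (T : (X →L[ℂ] X)ˣ) (α : ℝ)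
    (h : ∀ y : ℤ → X, Summable (fun n : ℤ => ‖y n‖) →
      α * ∑' n : ℤ, ‖y n‖ ≤
        ∑' n : ℤ, ‖y (n - 1) - (ContinuousLinearMap.adjoint (T : X →L[ℂ] X)) (y n)‖) :
    ∀ x : X,
      α * ‖x‖ ≤ ‖((1 : X →L[ℂ] X) -
        ContinuousLinearMap.adjoint (T : X →L[ℂ] X)) x‖ := by
  intro x
  set A := ContinuousLinearMap.adjoint (T : X →L[ℂ] X)
  have hblock (N : ℕ) : α * ((N + 1) * ‖x‖) ≤ ‖A x‖ + N * ‖x - A x‖ + ‖x‖ := by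
    simpa only [tsum_norm_blockSeq, tsum_norm_blockSeq_sub_map_shift] using
      h (blockSeq x N) (summable_norm_blockSeq x N)
  rw [sub_apply, one_apply_eq_self]
  refine le_of_forall_nat_mul_le_mul_add (b := ‖A x‖ + ‖x‖ - α * ‖x‖) fun N => ?_
  linarith [hblock N]

/-- If `Σ_n ‖y_{n-1} - T* y_n‖ ≥ α Σ_n ‖y_n‖` for every `ℓ¹` sequence `(y_n)` in `X`,
then `‖(I - T*) x‖ ≥ α ‖x‖` for every `x ∈ X`; in particular `I - T*` is bounded
below. -/
theorem boundedBelow_of_l1_estimate (T : (X →L[ℂ] X)ˣ) (α : ℝ) (hα : 0 < α)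
    (h : ∀ y : ℤ → X, Summable (fun n : ℤ => ‖y n‖) →
      α * ∑' n : ℤ, ‖y n‖ ≤
        ∑' n : ℤ, ‖y (n - 1) - (ContinuousLinearMap.adjoint (T : X →L[ℂ] X)) (y n)‖) :
    ∀ x : X,
      α * ‖x‖ ≤ ‖((1 : X →L[ℂ] X) -
        ContinuousLinearMap.adjoint (T : X →L[ℂ] X)) x‖ :=
  boundedBelow_of_l1_estimate_general T α h
end
end

section
/- Let X be a complex Hilbert space and let T be an invertible bounded linear operator on X such that λI − T has a bounded linear right inverse for every λ with 1 − ε < |λ| < 1 + ε (for some ε > 0), and suppose there is a holomorphic operator-valued right inverse R on this annulus, i.e., (λI − T)R(λ) = I there, with Laurent expansion R(λ) = Σ_{n∈ℤ} C_n λⁿ. Then the operator B = C₋₁ satisfies limsup_{n→∞} ‖Tⁿ B‖^{1/n} ≤ 1 − ε < 1 and limsup_{n→∞} ‖T⁻ⁿ(I − B)‖^{1/n} ≤ 1/(1 + ε) < 1. -/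
/-!
Convergence of both halves of the Laurent series at the radii `1 ± ε/2` makes the coefficients
decay geometrically in both directions, so on the unit circle the series converges absolutely and
its coefficients are recovered by integrating against `z ^ m`. Comparing the Laurent expansions of
the two sides of `λ R(λ) = 1 + T R(λ)` gives `C (n - 1) = T C n + δ_{n,0}`, hence
`Tⁿ C₋₁ = C_{-n-1}` and `T⁻ⁿ (1 - C₋₁) = -C_{n-1}` for `n ≥ 1`. The root-test estimates then follow
from the bounds `‖C n‖ ≤ M r⁻ⁿ`, valid at every radius `r` of the annulus.
-/

open Filter Topology

noncomputable section

variable {X : Type*} [NormedAddCommGroup X] [InnerProductSpace ℂ X] [CompleteSpace X]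

open Metric Set Finset Complex Real

theorem exists_norm_le_of_tendsto_sum_range {E : Type*} [SeminormedAddCommGroup E] {f : ℕ → E}
    {a : E} (h : Tendsto (fun N => ∑ n ∈ range N, f n) atTop (𝓝 a)) : ∃ M, ∀ n, ‖f n‖ ≤ M := by
  have hf : Tendsto f atTop (𝓝 0) := by
    simpa [sum_range_succ] using ((tendsto_add_atTop_iff_nat 1).2 h).sub h
  obtain ⟨M, hM⟩ := hf.norm.bddAbove_range
  exact ⟨M, fun n => hM ⟨n, rfl⟩⟩

theorem circleIntegral_zpow (k : ℤ) :
    (∮ z in C(0, 1), z ^ k) = if k = -1 then 2 * π * I else 0 := by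
  split_ifs with hk
  · subst hk
    simpa using
      circleIntegral.integral_sub_inv_of_mem_ball (c := 0) (w := 0) (mem_ball_self one_pos)
  · simpa using circleIntegral.integral_sub_zpow_of_ne hk 0 0 1

theorem summable_norm_of_le_mul_zpow {E : Type*} [SeminormedAddCommGroup E] {D : ℤ → E}
    {r s M N : ℝ} (hr : 0 < r) (hr1 : r < 1) (hs : 1 < s) (hDr : ∀ n, ‖D n‖ ≤ M * r ^ (-n))
    (hDs : ∀ n, ‖D n‖ ≤ N * s ^ (-n)) :
    Summable fun n => ‖D n‖ := by
  refine .of_nat_of_neg_add_one ?_ ?_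
  · refine .of_nonneg_of_le (fun _ => norm_nonneg _) (fun n => ?_)
      ((summable_geometric_of_lt_one (by positivity) (inv_lt_one_of_one_lt₀ hs)).mul_left N)
    simpa [zpow_neg, inv_pow] using hDs n
  · refine .of_nonneg_of_le (fun _ => norm_nonneg _) (fun n => ?_)
      ((summable_geometric_of_lt_one hr.le hr1).mul_left (M * r))
    have hn := hDr (-(n + 1))
    rw [neg_neg, zpow_add_one₀ hr.ne', zpow_natCast] at hn
    linarith

section Laurent

variable {E : Type*} [NormedAddCommGroup E] [NormedSpace ℂ E]

theorem circleIntegral_zpow_smul_eq_of_hasSum [CompleteSpace E] {D : ℤ → E} {S : ℂ → E}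
    (hD : Summable fun n => ‖D n‖)
    (hS : ∀ z ∈ sphere (0 : ℂ) 1, HasSum (fun n => z ^ n • D n) (S z)) (m : ℤ) :
    (∮ z in C(0, 1), z ^ m • S z) = (2 * π * I) • D (-m - 1) := by
  have hterm : ∀ n, (∮ z in C(0, 1), z ^ m • z ^ n • D n)
      = if n = -m - 1 then (2 * π * I) • D (-m - 1) else 0 := by
    intro n
    have hmerge : (∮ z in C(0, 1), z ^ m • z ^ n • D n) = ∮ z in C(0, 1), z ^ (m + n) • D n := by
      refine circleIntegral.integral_congr zero_le_one fun z hz => ?_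
      have hz0 : z ≠ 0 := ne_of_mem_sphere hz one_ne_zero
      rw [smul_smul, zpow_add₀ hz0]
    rw [hmerge, circleIntegral.integral_smul_const, circleIntegral_zpow]
    by_cases h : n = -m - 1
    · simp [h, show m + (-m - 1) = -1 by ring]
    · simp [h, show m + n ≠ -1 by omega]
  have hsum : HasSum (fun n => ∮ z in C(0, 1), z ^ m • z ^ n • D n)
      (∮ z in C(0, 1), z ^ m • S z) := by
    refine intervalIntegral.hasSum_integral_of_dominated_convergence (fun n _ => ‖D n‖)
      ?_ ?_ ?_ ?_ ?_
    · intro n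
      have hc := continuous_circleMap 0 1
      have hzpow : ∀ k : ℤ, Continuous fun θ => circleMap 0 1 θ ^ k := fun k =>
        hc.zpow₀ k fun _ => .inl (circleMap_ne_center one_ne_zero)
      refine Continuous.aestronglyMeasurable ?_
      simp only [deriv_circleMap]
      exact (hc.mul continuous_const).smul
        ((hzpow m).smul ((hzpow n).smul continuous_const))
    · intro n
      refine .of_forall fun θ _ => ?_
      simp [norm_smul, norm_zpow]
    · exact .of_forall fun _ _ => hD
    · exact intervalIntegrable_const
    · refine .of_forall fun θ _ => ?_
      exact ((hS _ (circleMap_mem_sphere 0 zero_le_one θ)).const_smul _).const_smul _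
  rw [funext hterm] at hsum
  exact hsum.unique (hasSum_ite_eq _ _)

theorem eq_of_hasSum_zpow_smul [CompleteSpace E] {D D' : ℤ → E} {S : ℂ → E}
    (hD : Summable fun n => ‖D n‖) (hD' : Summable fun n => ‖D' n‖)
    (hS : ∀ z ∈ sphere (0 : ℂ) 1, HasSum (fun n => z ^ n • D n) (S z))
    (hS' : ∀ z ∈ sphere (0 : ℂ) 1, HasSum (fun n => z ^ n • D' n) (S z)) : D = D' := by
  funext n
  have h := (circleIntegral_zpow_smul_eq_of_hasSum hD hS (-n - 1)).symm.trans
    (circleIntegral_zpow_smul_eq_of_hasSum hD' hS' (-n - 1))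
  rw [show -(-n - 1) - 1 = n by ring] at h
  exact smul_right_injective E two_pi_I_ne_zero h

theorem exists_norm_le_mul_zpow_of_tendsto {D : ℤ → E} {l : ℂ} (hl : l ≠ 0) {a b : E}
    (hpos : Tendsto (fun N : ℕ => ∑ n ∈ range N, l ^ n • D n) atTop (𝓝 a))
    (hneg : Tendsto (fun N : ℕ => ∑ n ∈ range N, l ^ (-(n : ℤ) - 1) • D (-(n : ℤ) - 1))
      atTop (𝓝 b)) :
    ∃ M, ∀ n : ℤ, ‖D n‖ ≤ M * ‖l‖ ^ (-n) := by
  obtain ⟨M₁, hM₁⟩ := exists_norm_le_of_tendsto_sum_range hpos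
  obtain ⟨M₂, hM₂⟩ := exists_norm_le_of_tendsto_sum_range hneg
  have hl' : 0 < ‖l‖ := norm_pos_iff.2 hl
  refine ⟨max M₁ M₂, fun n => ?_⟩
  have key : ‖l ^ n • D n‖ ≤ max M₁ M₂ := by
    rcases n with k | k
    · simpa using (hM₁ k).trans (le_max_left _ _)
    · rw [Int.negSucc_eq, neg_add']
      exact (hM₂ k).trans (le_max_right _ _)
  rw [norm_smul, norm_zpow] at key
  rw [zpow_neg, ← div_eq_mul_inv, le_div_iff₀ (zpow_pos hl' n), mul_comm]
  exact key

theorem hasSum_zpow_smul_of_tendsto [CompleteSpace E] {D : ℤ → E} (hD : Summable fun n => ‖D n‖)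
    {z : ℂ} (hz : z ∈ sphere (0 : ℂ) 1) {a b : E}
    (hpos : Tendsto (fun N : ℕ => ∑ n ∈ range N, z ^ n • D n) atTop (𝓝 a))
    (hneg : Tendsto (fun N : ℕ => ∑ n ∈ range N, z ^ (-(n : ℤ) - 1) • D (-(n : ℤ) - 1))
      atTop (𝓝 b)) :
    HasSum (fun n : ℤ => z ^ n • D n) (a + b) := by
  have hz1 : ‖z‖ = 1 := mem_sphere_zero_iff_norm.1 hz
  have hsum : Summable fun n : ℤ => z ^ n • D n :=
    .of_norm (by simpa [norm_smul, norm_zpow, hz1] using hD)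
  have hinj : Function.Injective fun n : ℕ => -((n : ℤ) + 1) := fun i j h => by simpa using h
  refine .of_nat_of_neg_add_one
    ((hsum.comp_injective Nat.cast_injective).hasSum_iff_tendsto_nat.2 ?_)
    ((hsum.comp_injective hinj).hasSum_iff_tendsto_nat.2 ?_)
  · simpa using hpos
  · simpa only [Function.comp_def, neg_add'] using hneg

end Laurent

theorem coeff_sub_one_eq_of_right_inverse {A : Type*} [NormedRing A] [NormedAlgebra ℂ A]
    [CompleteSpace A]
    {T : A} {R : ℂ → A} {C : ℤ → A} (hC : Summable fun n => ‖C n‖)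
    (hsum : ∀ z ∈ sphere (0 : ℂ) 1, HasSum (fun n => z ^ n • C n) (R z))
    (hR : ∀ z ∈ sphere (0 : ℂ) 1, (z • 1 - T) * R z = 1) (n : ℤ) :
    C (n - 1) = T * C n + if n = 0 then 1 else 0 := by
  suffices key : (fun n => C (n - 1)) = fun n => T * C n + if n = 0 then 1 else 0 from
    congrFun key n
  refine eq_of_hasSum_zpow_smul (S := fun z => z • R z) ?_ ?_ ?_ ?_
  · exact (Equiv.subRight (1 : ℤ)).summable_iff (f := fun n => ‖C n‖) |>.2 hC
  · refine .of_nonneg_of_le (fun _ => norm_nonneg _)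
      (fun n => (norm_add_le _ _).trans (add_le_add (norm_mul_le _ _) le_rfl))
      ((hC.mul_left ‖T‖).add ((hasSum_ite_eq 0 ‖(1 : A)‖).summable.congr fun n => ?_))
    split_ifs <;> simp
  · intro z hz
    have hz0 : z ≠ 0 := ne_of_mem_sphere hz one_ne_zero
    rw [← (Equiv.addRight 1).hasSum_iff]
    refine ((hsum z hz).const_smul z).congr_fun fun n => ?_
    simp [zpow_add_one₀ hz0, smul_smul, mul_comm]
  · intro z hz
    have hres : z • R z = T * R z + 1 := by
      rw [← sub_eq_iff_eq_add', ← smul_one_mul, ← sub_mul, hR z hz]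
    rw [hres]
    refine (((hsum z hz).mul_left T).add (hasSum_ite_eq (0 : ℤ) (1 : A))).congr_fun fun n => ?_
    rw [smul_add, mul_smul_comm]
    split_ifs with h <;> simp [h]

theorem pow_mul_coeff_neg_one_of_recurrence {A : Type*} [Ring A] {T : A} {C : ℤ → A}
    (hrec : ∀ n, C (n - 1) = T * C n + if n = 0 then 1 else 0) (n : ℕ) :
    T ^ n * C (-1) = C (-n - 1) := by
  induction n with
  | zero => simp
  | succ n ih =>
    have h := hrec (-n - 1)
    rw [if_neg (by omega), add_zero] at h
    rw [pow_succ', mul_assoc, ih, ← h]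
    congr 1
    push_cast
    ring

theorem inv_pow_mul_one_sub_coeff_neg_one_of_recurrence {A : Type*} [Ring A] {T : Aˣ} {C : ℤ → A}
    (hrec : ∀ n, C (n - 1) = T * C n + if n = 0 then 1 else 0) (n : ℕ) :
    (↑T⁻¹ : A) ^ (n + 1) * (1 - C (-1)) = -C n := by
  induction n with
  | zero =>
    have h := hrec 0
    rw [if_pos rfl, zero_sub] at h
    rw [h, pow_one, sub_add_cancel_right, mul_neg, Units.inv_mul_cancel_left, Nat.cast_zero]
  | succ n ih =>
    have h := hrec (n + 1)
    rw [if_neg (by omega), add_zero, add_sub_cancel_right] at h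
    rw [pow_succ', mul_assoc, ih, h, mul_neg, Units.inv_mul_cancel_left]
    push_cast
    rfl

theorem limsup_rpow_one_div_le_of_le_mul_pow {f : ℕ → ℝ} (hf0 : ∀ n, 0 ≤ f n) {M r : ℝ}
    (hr : 0 ≤ r) (hf : ∀ᶠ n in atTop, f n ≤ M * r ^ n) :
    limsup (fun n : ℕ => f n ^ ((1 : ℝ) / n)) atTop ≤ r := by
  set M' := max M 1
  have hM' : 0 < M' := lt_max_of_lt_right one_pos
  have hlim : Tendsto (fun n : ℕ => M' ^ ((1 : ℝ) / n) * r) atTop (𝓝 r) := by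
    simpa using ((tendsto_const_nhds (x := M')).rpow tendsto_one_div_atTop_nhds_zero_nat
      (.inl hM'.ne')).mul_const r
  have hle : ∀ᶠ n : ℕ in atTop, f n ^ ((1 : ℝ) / n) ≤ M' ^ ((1 : ℝ) / n) * r := by
    filter_upwards [hf, eventually_ge_atTop 1] with n hn hn1
    calc f n ^ ((1 : ℝ) / n) ≤ (M' * r ^ n) ^ ((1 : ℝ) / n) :=
          Real.rpow_le_rpow (hf0 n)
            (hn.trans (mul_le_mul_of_nonneg_right (le_max_left _ _) (by positivity)))
            (by positivity)
      _ = M' ^ ((1 : ℝ) / n) * r := by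
          rw [Real.mul_rpow hM'.le (by positivity), one_div,
            Real.pow_rpow_inv_natCast hr (by omega)]
  calc limsup (fun n : ℕ => f n ^ ((1 : ℝ) / n)) atTop
      ≤ limsup (fun n : ℕ => M' ^ ((1 : ℝ) / n) * r) atTop :=
        limsup_le_limsup hle (isCoboundedUnder_le_of_le atTop fun n => Real.rpow_nonneg (hf0 n) _)
          hlim.isBoundedUnder_le
    _ = r := hlim.limsup_eq

theorem limsup_rpow_one_div_le_of_forall_le_mul_pow {f : ℕ → ℝ} (hf0 : ∀ n, 0 ≤ f n) {a b : ℝ}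
    (ha : 0 ≤ a) (hab : a < b) (hf : ∀ r ∈ Ioo a b, ∃ M, ∀ᶠ n in atTop, f n ≤ M * r ^ n) :
    limsup (fun n : ℕ => f n ^ ((1 : ℝ) / n)) atTop ≤ a :=
  ge_of_tendsto (tendsto_nhdsWithin_of_tendsto_nhds tendsto_id)
    (eventually_of_mem (Ioo_mem_nhdsGT hab) fun r hr =>
      have ⟨_, hM⟩ := hf r hr
      limsup_rpow_one_div_le_of_le_mul_pow hf0 (ha.trans hr.1.le) hM)

theorem limsup_norm_pow_mul_coeff_neg_one_le {A : Type*} [NormedRing A] {T : A} {C : ℤ → A}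
    (hrec : ∀ n, C (n - 1) = T * C n + if n = 0 then 1 else 0) {ρ : ℝ} (hρ0 : 0 ≤ ρ)
    (hρ1 : ρ < 1) (hbound : ∀ r ∈ Ioo ρ 1, ∃ M, ∀ n : ℤ, ‖C n‖ ≤ M * r ^ (-n)) :
    limsup (fun n : ℕ => ‖T ^ n * C (-1)‖ ^ ((1 : ℝ) / n)) atTop ≤ ρ := by
  refine limsup_rpow_one_div_le_of_forall_le_mul_pow (fun _ => norm_nonneg _) hρ0 hρ1
    fun r hr => ?_
  obtain ⟨M, hM⟩ := hbound r hr
  refine ⟨M * r, .of_forall fun n => ?_⟩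
  rw [pow_mul_coeff_neg_one_of_recurrence hrec]
  calc ‖C (-n - 1)‖ ≤ M * r ^ (-(-(n : ℤ) - 1)) := hM _
    _ = M * r * r ^ n := by
      rw [show -(-(n : ℤ) - 1) = ((n + 1 : ℕ) : ℤ) by push_cast; ring, zpow_natCast, pow_succ]
      ring

theorem limsup_norm_inv_pow_mul_one_sub_coeff_neg_one_le {A : Type*} [NormedRing A] {T : Aˣ}
    {C : ℤ → A} (hrec : ∀ n, C (n - 1) = T * C n + if n = 0 then 1 else 0) {ρ : ℝ} (hρ : 1 < ρ)
    (hbound : ∀ s ∈ Ioo 1 ρ, ∃ M, ∀ n : ℤ, ‖C n‖ ≤ M * s ^ (-n)) :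
    limsup (fun n : ℕ => ‖(↑T⁻¹ : A) ^ n * (1 - C (-1))‖ ^ ((1 : ℝ) / n)) atTop ≤ ρ⁻¹ := by
  have hρ0 : 0 < ρ := one_pos.trans hρ
  refine limsup_rpow_one_div_le_of_forall_le_mul_pow (fun _ => norm_nonneg _) (inv_nonneg.2 hρ0.le)
    (inv_lt_one_of_one_lt₀ hρ) fun r hr => ?_
  have hr0 : 0 < r := (inv_pos.2 hρ0).trans hr.1
  obtain ⟨M, hM⟩ := hbound r⁻¹ ⟨one_lt_inv_iff₀.2 ⟨hr0, hr.2⟩, inv_lt_of_inv_lt₀ hρ0 hr.1⟩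
  refine ⟨M * r⁻¹, eventually_atTop.2 ⟨1, fun n hn => ?_⟩⟩
  obtain ⟨k, rfl⟩ := Nat.exists_eq_add_of_le' hn
  rw [inv_pow_mul_one_sub_coeff_neg_one_of_recurrence hrec, norm_neg]
  calc ‖C k‖ ≤ M * r⁻¹ ^ (-(k : ℤ)) := hM k
    _ = M * r⁻¹ * r ^ (k + 1) := by
      rw [inv_zpow', neg_neg, zpow_natCast, pow_succ]
      field_simp

theorem laurent_right_inverse_gives_splitting_general (T : (X →L[ℂ] X)ˣ) (ε : ℝ)
    (hε : 0 < ε) (hε1 : ε < 1)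
    (R : ℂ → (X →L[ℂ] X))
    (hR : ∀ l : ℂ, 1 - ε < ‖l‖ → ‖l‖ < 1 + ε →
      (l • (1 : X →L[ℂ] X) - (T : X →L[ℂ] X)) * R l = 1)
    (C : ℤ → (X →L[ℂ] X))
    (hC : ∀ l : ℂ, 1 - ε < ‖l‖ → ‖l‖ < 1 + ε →
      ∃ Rp Rm : X →L[ℂ] X,
        Filter.Tendsto (fun N : ℕ => ∑ n ∈ Finset.range N, l ^ n • C n)
          Filter.atTop (nhds Rp) ∧
        Filter.Tendsto
          (fun N : ℕ => ∑ n ∈ Finset.range N, l ^ (-(n : ℤ) - 1) • C (-(n : ℤ) - 1))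
          Filter.atTop (nhds Rm) ∧
        R l = Rp + Rm) :
    (Filter.limsup
        (fun n : ℕ => ‖(T : X →L[ℂ] X) ^ n * C (-1)‖ ^ ((1 : ℝ) / n))
        Filter.atTop ≤ 1 - ε ∧ 1 - ε < 1) ∧
    (Filter.limsup
        (fun n : ℕ => ‖((T⁻¹ : (X →L[ℂ] X)ˣ) : X →L[ℂ] X) ^ n *
          (1 - C (-1))‖ ^ ((1 : ℝ) / n)) Filter.atTop ≤ 1 / (1 + ε) ∧
      1 / (1 + ε) < 1) := by
  have hbound : ∀ r ∈ Ioo (1 - ε) (1 + ε), ∃ M, ∀ n : ℤ, ‖C n‖ ≤ M * r ^ (-n) := by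
    intro r hr
    have hr' : ‖(r : ℂ)‖ = r := by simp [abs_of_pos (by linarith [hr.1] : 0 < r)]
    obtain ⟨_, _, hpos, hneg, -⟩ := hC r (by rw [hr']; exact hr.1) (by rw [hr']; exact hr.2)
    simpa only [hr'] using
      exists_norm_le_mul_zpow_of_tendsto (ofReal_ne_zero.2 (by linarith [hr.1])) hpos hneg
  have hmem : ∀ z ∈ sphere (0 : ℂ) 1, 1 - ε < ‖z‖ ∧ ‖z‖ < 1 + ε := fun z hz => by
    rw [mem_sphere_zero_iff_norm.1 hz]
    constructor <;> linarith
  obtain ⟨M₁, h₁⟩ := hbound (1 - ε / 2) ⟨by linarith, by linarith⟩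
  obtain ⟨M₂, h₂⟩ := hbound (1 + ε / 2) ⟨by linarith, by linarith⟩
  have hCsum := summable_norm_of_le_mul_zpow (by linarith) (by linarith) (by linarith) h₁ h₂
  have hLaurent : ∀ z ∈ sphere (0 : ℂ) 1, HasSum (fun n => z ^ n • C n) (R z) := by
    intro z hz
    obtain ⟨_, _, hpos, hneg, hRz⟩ := hC z (hmem z hz).1 (hmem z hz).2
    exact hRz ▸ hasSum_zpow_smul_of_tendsto hCsum hz hpos hneg
  have hrec := coeff_sub_one_eq_of_right_inverse hCsum hLaurent fun z hz =>
    hR z (hmem z hz).1 (hmem z hz).2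
  refine ⟨⟨limsup_norm_pow_mul_coeff_neg_one_le hrec (by linarith) (by linarith)
    fun r hr => hbound r (Ioo_subset_Ioo_right (by linarith) hr), by linarith⟩, ?_,
    (div_lt_one (by linarith)).2 (by linarith)⟩
  rw [one_div]
  exact limsup_norm_inv_pow_mul_one_sub_coeff_neg_one_le hrec (by linarith)
    fun s hs => hbound s (Ioo_subset_Ioo_left (by linarith) hs)

/-- If `λI - T` is right invertible on the annulus `1 - ε < |λ| < 1 + ε` and `R` is a
holomorphic right inverse of `λI - T` there, with Laurent expansion
`R(λ) = Σ_{n∈ℤ} C_n λⁿ`, then `B = C₋₁` satisfies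
`limsup ‖Tⁿ B‖^{1/n} ≤ 1 - ε < 1` and `limsup ‖T⁻ⁿ (I - B)‖^{1/n} ≤ 1/(1 + ε) < 1`. -/
theorem laurent_right_inverse_gives_splitting (T : (X →L[ℂ] X)ˣ) (ε : ℝ)
    (hε : 0 < ε) (hε1 : ε < 1)
    (hrinv : ∀ l : ℂ, 1 - ε < ‖l‖ → ‖l‖ < 1 + ε →
      ∃ S : X →L[ℂ] X, (l • (1 : X →L[ℂ] X) - (T : X →L[ℂ] X)) * S = 1)
    (R : ℂ → (X →L[ℂ] X))
    (hol : DifferentiableOn ℂ R {l : ℂ | 1 - ε < ‖l‖ ∧ ‖l‖ < 1 + ε})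
    (hR : ∀ l : ℂ, 1 - ε < ‖l‖ → ‖l‖ < 1 + ε →
      (l • (1 : X →L[ℂ] X) - (T : X →L[ℂ] X)) * R l = 1)
    (C : ℤ → (X →L[ℂ] X))
    (hC : ∀ l : ℂ, 1 - ε < ‖l‖ → ‖l‖ < 1 + ε →
      ∃ Rp Rm : X →L[ℂ] X,
        Filter.Tendsto (fun N : ℕ => ∑ n ∈ Finset.range N, l ^ n • C n)
          Filter.atTop (nhds Rp) ∧
        Filter.Tendsto
          (fun N : ℕ => ∑ n ∈ Finset.range N, l ^ (-(n : ℤ) - 1) • C (-(n : ℤ) - 1))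
          Filter.atTop (nhds Rm) ∧
        R l = Rp + Rm) :
    (Filter.limsup
        (fun n : ℕ => ‖(T : X →L[ℂ] X) ^ n * C (-1)‖ ^ ((1 : ℝ) / n))
        Filter.atTop ≤ 1 - ε ∧ 1 - ε < 1) ∧
    (Filter.limsup
        (fun n : ℕ => ‖((T⁻¹ : (X →L[ℂ] X)ˣ) : X →L[ℂ] X) ^ n *
          (1 - C (-1))‖ ^ ((1 : ℝ) / n)) Filter.atTop ≤ 1 / (1 + ε) ∧
      1 / (1 + ε) < 1) :=
  laurent_right_inverse_gives_splitting_general T ε hε hε1 R hR C hC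
end
end
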